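/- arXiv:1602.00725 — 13 statements merged into one kernel-verified Lean document; each statement's English description precedes it below -/
import Mathlib

section
/- Let (X,d) be a nonempty complete metric space and let {f₁,...,fₙ} be a commuting λ-contractive family of continuous self-maps of X (each fᵢ∘fⱼ = fⱼ∘fᵢ). If every λ-contractive commuting family of n−1 continuous operators on a nonempty complete metric space has a common fixed point, and f₁ has a fixed point, then f₁,...,fₙ have a common fixed point. In particular: if some fᵢ has a fixed point and the set of its fixed points is preserved by the other maps, the induction goes through; concretely, the set S₁ of fixed points of f₁ is a nonempty closed subset of X invariant under f₂,...,fₙ, and {f₂|S₁,...,fₙ|S₁} is a λ-contractive family on S₁. -/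
/-!
The fixed-point set `S` of `f 0` is closed, hence complete, and nonempty by assumption. Since
every `f i` commutes with `f 0`, it maps `S` into itself, and the restrictions of
`f 1, …, f n` to `S` still commute. They are still `λ`-contractive: whenever only `f 0` contracts
a pair of points of `S`, it acts on them as the identity, so `d(x, y) ≤ λ d(x, y)` and `x = y`.
A common fixed point of the restricted family is then a common fixed point of all `f i`.
-/

universe u

open Function Set

theorem eq_of_dist_le_mul_dist {X : Type*} [MetricSpace X] {lam : ℝ} (hlam1 : lam < 1)
    {x y : X} (h : dist x y ≤ lam * dist x y) : x = y :=
  dist_le_zero.mp (by nlinarith [dist_nonneg (x := x) (y := y)])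

theorem exists_dist_restrict_fixedPoints_le {X ι : Type*} [MetricSpace X] [Nonempty ι]
    {lam : ℝ} (hlam1 : lam < 1) {g : X → X} {h : ι → X → X}
    (hmaps : ∀ i, MapsTo (h i) (fixedPoints g) (fixedPoints g))
    (hcontr : ∀ x y : X,
      dist (g x) (g y) ≤ lam * dist x y ∨ ∃ i, dist (h i x) (h i y) ≤ lam * dist x y)
    (x y : fixedPoints g) :
    ∃ i, dist ((hmaps i).restrict (h i) _ _ x) ((hmaps i).restrict (h i) _ _ y) ≤
      lam * dist x y := by
  rcases hcontr x y with hg | hh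
  · rw [x.2.eq, y.2.eq] at hg
    obtain rfl : x = y := Subtype.ext (eq_of_dist_le_mul_dist hlam1 hg)
    exact ⟨Classical.arbitrary ι, by simp⟩
  · exact hh

theorem Set.MapsTo.restrict_comm {α : Type*} {s : Set α} {f g : α → α} (hf : MapsTo f s s)
    (hg : MapsTo g s s) (hfg : f ∘ g = g ∘ f) :
    hf.restrict ∘ hg.restrict = hg.restrict ∘ hf.restrict :=
  funext fun x => Subtype.ext (congrFun hfg x)

theorem stmt1_general {X : Type u} [MetricSpace X] [CompleteSpace X]
    (n : ℕ) (lam : ℝ) (hlam1 : lam < 1)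
    (f : Fin (n + 1) → X → X)
    (hcont : ∀ i, Continuous (f i))
    (hcomm : ∀ i j, f i ∘ f j = f j ∘ f i)
    (hcontr : ∀ x y : X, ∃ i, dist (f i x) (f i y) ≤ lam * dist x y)
    (IH : ∀ (Y : Type u) [MetricSpace Y] [CompleteSpace Y] [Nonempty Y]
        (g : Fin n → Y → Y), (∀ i, Continuous (g i)) →
        (∀ i j, g i ∘ g j = g j ∘ g i) →
        (∀ x y : Y, ∃ i, dist (g i x) (g i y) ≤ lam * dist x y) →
        ∃ y : Y, ∀ i, g i y = y)
    (hfix : ∃ x : X, f 0 x = x) :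
    ∃ x : X, ∀ i, f i x = x := by
  obtain ⟨x₀, hx₀⟩ := hfix
  cases n with
  | zero => exact ⟨x₀, fun i => Fin.fin_one_eq_zero i ▸ hx₀⟩
  | succ m =>
    have : CompleteSpace (fixedPoints (f 0)) := (isClosed_fixedPoints (hcont 0)).completeSpace_coe
    have : Nonempty (fixedPoints (f 0)) := ⟨⟨x₀, hx₀⟩⟩
    have hmaps : ∀ j : Fin (m + 1), MapsTo (f j.succ) (fixedPoints (f 0)) (fixedPoints (f 0)) :=
      fun j => Semiconj.mapsTo_fixedPoints (congrFun (hcomm j.succ 0))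
    obtain ⟨y, hy⟩ := IH (fixedPoints (f 0)) (fun j => (hmaps j).restrict)
      (fun j => (hcont j.succ).restrict (hmaps j))
      (fun i j => (hmaps i).restrict_comm (hmaps j) (hcomm i.succ j.succ))
      (exists_dist_restrict_fixedPoints_le hlam1 hmaps fun x y =>
        Fin.exists_fin_succ.mp (hcontr x y))
    exact ⟨y, Fin.cases y.2 fun j => congrArg Subtype.val (hy j)⟩

theorem stmt1 {X : Type u} [MetricSpace X] [CompleteSpace X] [Nonempty X]
    (n : ℕ) (lam : ℝ) (hlam0 : 0 < lam) (hlam1 : lam < 1)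
    (f : Fin (n + 1) → X → X)
    (hcont : ∀ i, Continuous (f i))
    (hcomm : ∀ i j, f i ∘ f j = f j ∘ f i)
    (hcontr : ∀ x y : X, ∃ i, dist (f i x) (f i y) ≤ lam * dist x y)
    (IH : ∀ (Y : Type u) [MetricSpace Y] [CompleteSpace Y] [Nonempty Y]
        (g : Fin n → Y → Y), (∀ i, Continuous (g i)) →
        (∀ i j, g i ∘ g j = g j ∘ g i) →
        (∀ x y : Y, ∃ i, dist (g i x) (g i y) ≤ lam * dist x y) →
        ∃ y : Y, ∀ i, g i y = y)
    (hfix : ∃ x : X, f 0 x = x) :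
    ∃ x : X, ∀ i, f i x = x :=
  stmt1_general n lam hlam1 f hcont hcomm hcontr IH hfix
end

section
/- Let d be a pseudometric on ℕ₀³ and λ ∈ (0,1) such that for all a,b ∈ ℕ₀³ there exists i ∈ {1,2,3} with d(a+eᵢ, b+eᵢ) ≤ λ·d(a,b). Define ρ(x) = max{d(x,x+e₁), d(x,x+e₂), d(x,x+e₃)}. Then for all x,y ∈ ℕ₀³: d(x,y) ≤ (ρ(x)+ρ(y))/(1−λ). -/
/-- The grid ℕ₀³. -/
abbrev Grid : Type := Fin 3 → ℕ

/-- Standard basis vector eᵢ. -/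
def e (i : Fin 3) : Grid := fun j => if j = i then 1 else 0

/-- ρ(x) = max of the three distances to successors. -/
noncomputable def rho (d : Grid → Grid → ℝ) (x : Grid) : ℝ :=
  max (d x (x + e 0)) (max (d x (x + e 1)) (d x (x + e 2)))

/-- A 1-way sequence: consecutive differences are basis vectors. -/
def OneWay (s : ℕ → Grid) : Prop := ∀ n, ∃ i, s (n + 1) = s n + e i

/-- Cauchy with respect to the pseudometric d. -/
def IsCauchySeq (d : Grid → Grid → ℝ) (s : ℕ → Grid) : Prop :=
  ∀ ε > (0 : ℝ), ∃ N, ∀ m ≥ N, ∀ n ≥ N, d (s m) (s n) < ε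

/-- d is a pseudometric. -/
def Pseudo (d : Grid → Grid → ℝ) : Prop :=
  (∀ x, d x x = 0) ∧ (∀ x y, 0 ≤ d x y) ∧ (∀ x y, d x y = d y x) ∧
    (∀ x y z, d x z ≤ d x y + d y z)

/-- The coordinatewise λ-contraction property. -/
def Contractive (d : Grid → Grid → ℝ) (lam : ℝ) : Prop :=
  ∀ a b : Grid, ∃ i : Fin 3, d (a + e i) (b + e i) ≤ lam * d a b

/-- A 2-way set: each element has exactly two of its three successors inside. -/
def TwoWaySet (S : Set Grid) : Prop :=
  ∀ s ∈ S, ∃ i : Fin 3, s + e i ∉ S ∧ ∀ j : Fin 3, j ≠ i → s + e j ∈ S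

/-- Furthest neighbour inequality. -/
theorem stmt2 (d : Grid → Grid → ℝ) (lam : ℝ) (h0 : 0 < lam) (h1 : lam < 1)
    (hd : Pseudo d) (hc : Contractive d lam) (x y : Grid) :
    d x y ≤ (rho d x + rho d y) / (1 - lam) := by
  obtain ⟨h00, hnn, hsym, htri⟩ := hd
  obtain ⟨i, hi⟩ := hc x y
  have hx : d x (x + e i) ≤ rho d x := by
    fin_cases i
    · exact le_max_left _ _
    · exact le_trans (le_max_left _ _) (le_max_right _ _)
    · exact le_trans (le_max_right _ _) (le_max_right _ _)
  have hy : d (y + e i) y ≤ rho d y := by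
    rw [hsym]
    fin_cases i
    · exact le_max_left _ _
    · exact le_trans (le_max_left _ _) (le_max_right _ _)
    · exact le_trans (le_max_right _ _) (le_max_right _ _)
  have key : d x y ≤ rho d x + lam * d x y + rho d y :=
    calc d x y ≤ d x (x + e i) + d (x + e i) y := htri _ _ _
      _ ≤ d x (x + e i) + (d (x + e i) (y + e i) + d (y + e i) y) := by
          linarith [htri (x + e i) (y + e i) y]
      _ ≤ rho d x + lam * d x y + rho d y := by linarith
  rw [le_div_iff₀ (by linarith)]
  nlinarith
end

section
/- Let d be a pseudometric on ℕ₀³ and λ ∈ (0,1) such that for all a,b there exists i with d(a+eᵢ,b+eᵢ) ≤ λ d(a,b). Fix x,y ∈ ℕ₀³ and define the sequence x₀ = y and x_{k+1} = x_k + e_{i(k)} where i(k) is an index contracting the pair (x, x_k). Then for all k, d(x, x_k) ≤ λᵏ·d(x,y) + ρ(x)/(1−λ). Consequently, for every ε > 0, all but finitely many terms x_k satisfy d(x_k, x) ≤ ρ(x)/(1−λ) + ε. -/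
theorem stmt3 (d : Grid → Grid → ℝ) (lam : ℝ) (h0 : 0 < lam) (h1 : lam < 1)
    (hd : Pseudo d) (hc : Contractive d lam)
    (x y : Grid) (seq : ℕ → Grid) (ι : ℕ → Fin 3)
    (hseq0 : seq 0 = y)
    (hstep : ∀ k, seq (k + 1) = seq k + e (ι k))
    (hcontrStep : ∀ k, d (x + e (ι k)) (seq k + e (ι k)) ≤ lam * d x (seq k)) :
    (∀ k, d x (seq k) ≤ lam ^ k * d x y + rho d x / (1 - lam)) ∧
      ∀ ε > (0 : ℝ), ∃ N, ∀ k ≥ N, d (seq k) x ≤ rho d x / (1 - lam) + ε := by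
  obtain ⟨hzero, hnn, hsymm, htri⟩ := hd
  have hrho_nn : 0 ≤ rho d x := le_trans (hnn _ _) (le_max_left _ _)
  have hstepbound : ∀ i : Fin 3, d x (x + e i) ≤ rho d x := by
    intro i
    fin_cases i
    · exact le_max_left _ _
    · exact le_trans (le_max_left _ _) (le_max_right _ _)
    · exact le_trans (le_max_right _ _) (le_max_right _ _)
  have key : ∀ k, d x (seq k) ≤ lam ^ k * d x y
      + rho d x * ∑ j ∈ Finset.range k, lam ^ j := by
    intro k
    induction k with
    | zero => simp [hseq0]
    | succ k ih =>
      have h2 : d x (seq (k+1)) ≤ d x (x + e (ι k)) + d (x + e (ι k)) (seq (k+1)) :=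
        htri _ _ _
      rw [hstep k] at *
      have h3 : d (x + e (ι k)) (seq k + e (ι k)) ≤ lam * d x (seq k) := hcontrStep k
      have h4 : lam * d x (seq k) ≤ lam * (lam ^ k * d x y
          + rho d x * ∑ j ∈ Finset.range k, lam ^ j) :=
        mul_le_mul_of_nonneg_left ih h0.le
      have h5 := hstepbound (ι k)
      have hgs : ∑ j ∈ Finset.range (k+1), lam ^ j
          = lam * ∑ j ∈ Finset.range k, lam ^ j + 1 := geom_sum_succ
      rw [hgs]
      calc d x (seq k + e (ι k)) ≤ d x (x + e (ι k)) + d (x + e (ι k)) (seq k + e (ι k)) := h2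
        _ ≤ rho d x + lam * (lam ^ k * d x y + rho d x * ∑ j ∈ Finset.range k, lam ^ j) := by
            linarith
        _ = lam ^ (k+1) * d x y + rho d x * (lam * ∑ j ∈ Finset.range k, lam ^ j + 1) := by ring
  have hsum : ∀ k, rho d x * ∑ j ∈ Finset.range k, lam ^ j ≤ rho d x / (1 - lam) := by
    intro k
    have hs : ∑ j ∈ Finset.range k, lam ^ j ≤ 1 / (1 - lam) := by
      have hm : (∑ j ∈ Finset.range k, lam ^ j) * (lam - 1) = lam ^ k - 1 := geom_sum_mul lam k
      rw [le_div_iff₀ (by linarith : (0:ℝ) < 1 - lam)]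
      nlinarith [pow_nonneg h0.le k]
    calc rho d x * ∑ j ∈ Finset.range k, lam ^ j ≤ rho d x * (1 / (1 - lam)) :=
          mul_le_mul_of_nonneg_left hs hrho_nn
      _ = rho d x / (1 - lam) := by ring
  have main : ∀ k, d x (seq k) ≤ lam ^ k * d x y + rho d x / (1 - lam) := fun k =>
    le_trans (key k) (by linarith [hsum k])
  refine ⟨main, fun ε hε => ?_⟩
  have htend : Filter.Tendsto (fun k => lam ^ k * d x y) Filter.atTop (nhds 0) := by
    simpa using (tendsto_pow_atTop_nhds_zero_of_lt_one h0.le h1).mul_const (d x y)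
  have hev := htend.eventually (eventually_le_nhds (by linarith : (0:ℝ) < ε))
  obtain ⟨N, hN⟩ := Filter.eventually_atTop.mp hev
  refine ⟨N, fun k hk => ?_⟩
  rw [hsymm]
  calc d x (seq k) ≤ lam ^ k * d x y + rho d x / (1 - lam) := main k
    _ ≤ ε + rho d x / (1 - lam) := by linarith [hN k hk]
    _ = rho d x / (1 - lam) + ε := by ring
end

section
/- Let d be a pseudometric on ℕ₀³ and λ ∈ (0,1) satisfying the coordinatewise λ-contraction property. If there exists x ∈ ℕ₀³ with ρ(x) = 0, then there exists a Cauchy sequence (xₙ) in (ℕ₀³, d) with x_{n+1} − xₙ ∈ {e₁, e₂, e₃} for all n. -/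
/-!
If ρ(x) = 0 then x is at distance 0 from each of its three successors. For any y
with d(x, y) = 0, contraction yields a direction i with
d(x, y + eᵢ) ≤ d(x, x + eᵢ) + d(x + eᵢ, y + eᵢ) ≤ 0 + λ·0 = 0,
so the points at distance 0 from x always contain a successor of each of their members.
Walking from x along such successors gives a 1-way sequence lying at distance 0 from x,
whose points are then pairwise at distance 0, so it is trivially Cauchy.
-/

theorem dist_add_e_eq_zero_of_rho_eq_zero {d : Grid → Grid → ℝ} (hd : Pseudo d) {x : Grid}
    (hx : rho d x = 0) (i : Fin 3) : d x (x + e i) = 0 := by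
  refine le_antisymm ?_ (hd.2.1 _ _)
  rw [← hx, rho]
  fin_cases i <;> simp

theorem exists_dist_add_e_eq_zero {d : Grid → Grid → ℝ} {lam : ℝ} (hd : Pseudo d)
    (hc : Contractive d lam) {x y : Grid} (hx : rho d x = 0) (hy : d x y = 0) :
    ∃ i : Fin 3, d x (y + e i) = 0 := by
  obtain ⟨i, hi⟩ := hc x y
  refine ⟨i, le_antisymm ?_ (hd.2.1 _ _)⟩
  calc d x (y + e i) ≤ d x (x + e i) + d (x + e i) (y + e i) := hd.2.2.2 _ _ _
    _ ≤ 0 + lam * d x y := add_le_add (dist_add_e_eq_zero_of_rho_eq_zero hd hx i).le hi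
    _ = 0 := by rw [hy]; ring

theorem exists_oneWay_forall_mem {P : Grid → Prop} {x : Grid} (hx : P x)
    (hP : ∀ y, P y → ∃ i, P (y + e i)) : ∃ s : ℕ → Grid, OneWay s ∧ ∀ n, P (s n) := by
  choose! next hnext using hP
  let step : Grid → Grid := fun y => y + e (next y)
  refine ⟨fun n => step^[n] x, fun n => ⟨next (step^[n] x), ?_⟩, fun n => ?_⟩
  · exact Function.iterate_succ_apply' step n x
  · induction n with
    | zero => exact hx
    | succ n ih =>
      show P (step^[n + 1] x)
      rw [Function.iterate_succ_apply']
      exact hnext _ ih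

theorem isCauchySeq_of_dist_eq_zero {d : Grid → Grid → ℝ} (hd : Pseudo d) {x : Grid}
    {s : ℕ → Grid} (hs : ∀ n, d x (s n) = 0) : IsCauchySeq d s := by
  obtain ⟨-, -, hsymm, htri⟩ := hd
  refine fun ε hε => ⟨0, fun m _ n _ => ?_⟩
  calc d (s m) (s n) ≤ d (s m) x + d x (s n) := htri _ _ _
    _ = 0 := by rw [hsymm, hs, hs, add_zero]
    _ < ε := hε

theorem stmt4_general (d : Grid → Grid → ℝ) (lam : ℝ)
    (hd : Pseudo d) (hc : Contractive d lam)
    (x : Grid) (hx : rho d x = 0) :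
    ∃ s : ℕ → Grid, OneWay s ∧ IsCauchySeq d s := by
  obtain ⟨s, hs, hzero⟩ := exists_oneWay_forall_mem (P := fun y => d x y = 0) (hd.1 x)
    fun _ hy => exists_dist_add_e_eq_zero hd hc hx hy
  exact ⟨s, hs, isCauchySeq_of_dist_eq_zero hd hzero⟩

theorem stmt4 (d : Grid → Grid → ℝ) (lam : ℝ) (h0 : 0 < lam) (h1 : lam < 1)
    (hd : Pseudo d) (hc : Contractive d lam)
    (x : Grid) (hx : rho d x = 0) :
    ∃ s : ℕ → Grid, OneWay s ∧ IsCauchySeq d s :=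
  stmt4_general d lam hd hc x hx
end

section
/- Let d be a pseudometric on ℕ₀³ and λ ∈ (0,1) satisfying the coordinatewise λ-contraction property. If inf{ρ(x) : x ∈ ℕ₀³} = 0, then there exists a Cauchy sequence (xₙ) in (ℕ₀³, d) with x_{n+1} − xₙ ∈ {e₁,e₂,e₃} for all n. -/
namespace Stmt5Aux

/-- Geometric scale sequence. -/
noncomputable def epsf (k : ℕ) : ℝ := (1/2 : ℝ) ^ k

lemma epsf_pos (k : ℕ) : 0 < epsf k := by
  unfold epsf; positivity

lemma epsf_anti {a b : ℕ} (h : a ≤ b) : epsf b ≤ epsf a := by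
  unfold epsf
  exact pow_le_pow_of_le_one (by norm_num) (by norm_num) h

lemma epsf_succ_le (k : ℕ) : epsf (k+1) ≤ epsf k := epsf_anti (Nat.le_succ k)

/-- Radius bound at the start of phase k. -/
noncomputable def Bf (lam : ℝ) : ℕ → ℝ
  | 0 => 1
  | (k+1) => 4 * epsf k / (1 - lam)

/-- State machine: (phase index, time within phase, current grid point). -/
def st (z : ℕ → Grid) (pick : ℕ → Grid → Fin 3) (T : ℕ → ℕ) : ℕ → ℕ × ℕ × Grid
  | 0 => (0, 0, z 0)
  | (n+1) =>
      let p := st z pick T n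
      if p.2.1 + 1 = T p.1 then (p.1 + 1, 0, p.2.2 + e (pick p.1 p.2.2))
      else (p.1, p.2.1 + 1, p.2.2 + e (pick p.1 p.2.2))

end Stmt5Aux

open Stmt5Aux in
theorem stmt5 (d : Grid → Grid → ℝ) (lam : ℝ) (h0 : 0 < lam) (h1 : lam < 1)
    (hd : Pseudo d) (hc : Contractive d lam)
    (hinf : IsGLB (Set.range (rho d)) 0) :
    ∃ s : ℕ → Grid, OneWay s ∧ IsCauchySeq d s := by
  obtain ⟨d0, dnn, dsymm, dtri⟩ := hd
  have hlam1 : (0:ℝ) < 1 - lam := by linarith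
  -- each edge is bounded by rho
  have edge : ∀ (x : Grid) (i : Fin 3), d x (x + e i) ≤ rho d x := by
    intro x i
    fin_cases i
    · exact le_max_left _ _
    · exact le_trans (le_max_left _ _) (le_max_right _ _)
    · exact le_trans (le_max_right _ _) (le_max_right _ _)
  have rnn : ∀ x, 0 ≤ rho d x := fun x => le_trans (dnn x _) (edge x 0)
  -- separation lemma : any two points are (rho a + rho b)/(1-lam) apart
  have sep : ∀ a b, d a b ≤ (rho d a + rho d b) / (1 - lam) := by
    intro a b
    obtain ⟨i, hi⟩ := hc a b
    have t1 : d a b ≤ d a (b + e i) + d (b + e i) b := dtri _ _ _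
    have t2 : d a (b + e i) ≤ d a (a + e i) + d (a + e i) (b + e i) := dtri _ _ _
    have h3 := edge a i
    have h4 := edge b i
    have h5 : d (b + e i) b = d b (b + e i) := dsymm _ _
    rw [le_div_iff₀ hlam1]
    nlinarith
  -- seeds
  have seed : ∀ ε : ℝ, 0 < ε → ∃ x, rho d x < ε := by
    intro ε hε
    by_contra hcon
    push_neg at hcon
    have : ε ≤ 0 := hinf.2 (by rintro y ⟨x, rfl⟩; exact hcon x)
    linarith
  choose z hz using fun k => seed (epsf k) (epsf_pos k)
  choose pick hpick using fun (k : ℕ) (x : Grid) => hc (z k) x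
  -- the pull dynamics
  have dyn : ∀ k x, d (z k) (x + e (pick k x)) ≤ epsf k + lam * d (z k) x := by
    intro k x
    have t1 : d (z k) (x + e (pick k x)) ≤
        d (z k) (z k + e (pick k x)) + d (z k + e (pick k x)) (x + e (pick k x)) := dtri _ _ _
    have t2 := edge (z k) (pick k x)
    have t3 := hpick k x
    have t4 := (hz k).le
    linarith
  -- B is positive
  have Bpos : ∀ k, 0 < Bf lam k := by
    intro k
    cases k with
    | zero => norm_num [Bf]
    | succ k =>
      show (0:ℝ) < 4 * epsf k / (1 - lam)
      have := epsf_pos k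
      positivity
  -- choose phase lengths
  have Texists : ∀ k : ℕ, ∃ Tk : ℕ, 1 ≤ Tk ∧ lam ^ Tk * Bf lam k ≤ epsf k / (1 - lam) := by
    intro k
    have htgt : 0 < (epsf k / (1 - lam)) / Bf lam k := by
      have := epsf_pos k
      have := Bpos k
      positivity
    obtain ⟨T0, hT0⟩ := exists_pow_lt_of_lt_one htgt h1
    refine ⟨max T0 1, le_max_right _ _, ?_⟩
    have hmono : lam ^ (max T0 1) ≤ lam ^ T0 :=
      pow_le_pow_of_le_one h0.le h1.le (le_max_left _ _)
    have hmul : lam ^ (max T0 1) * Bf lam k ≤ lam ^ T0 * Bf lam k :=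
      mul_le_mul_of_nonneg_right hmono (Bpos k).le
    have h2 : lam ^ T0 * Bf lam k < (epsf k / (1 - lam)) / Bf lam k * Bf lam k :=
      mul_lt_mul_of_pos_right hT0 (Bpos k)
    rw [div_mul_cancel₀ _ (Bpos k).ne'] at h2
    linarith
  choose T hT1 hT2 using Texists
  -- the sequence
  set S : ℕ → ℕ × ℕ × Grid := st z pick T with hS
  have hstep : ∀ n, S (n+1) =
      (if (S n).2.1 + 1 = T (S n).1
        then ((S n).1 + 1, 0, (S n).2.2 + e (pick (S n).1 (S n).2.2))
        else ((S n).1, (S n).2.1 + 1, (S n).2.2 + e (pick (S n).1 (S n).2.2))) := by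
    intro n
    rfl
  -- the invariant
  have inv : ∀ n, (S n).2.1 < T (S n).1 ∧
      d (z (S n).1) (S n).2.2 ≤ lam ^ (S n).2.1 * Bf lam (S n).1 + epsf (S n).1 / (1 - lam) := by
    intro n
    induction n with
    | zero =>
      constructor
      · exact lt_of_lt_of_le Nat.zero_lt_one (hT1 0)
      · show d (z 0) (z 0) ≤ lam ^ (0:ℕ) * Bf lam 0 + epsf 0 / (1 - lam)
        rw [d0]
        have hb := Bpos 0
        have he : 0 < epsf 0 / (1 - lam) := by
          have := epsf_pos 0
          positivity
        nlinarith
    | succ n ih =>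
      obtain ⟨ih1, ih2⟩ := ih
      have hd2 : d (z (S n).1) ((S n).2.2 + e (pick (S n).1 (S n).2.2)) ≤
          lam ^ ((S n).2.1 + 1) * Bf lam (S n).1 + epsf (S n).1 / (1 - lam) := by
        have t1 := dyn (S n).1 (S n).2.2
        have t2 : lam * d (z (S n).1) (S n).2.2 ≤
            lam * (lam ^ (S n).2.1 * Bf lam (S n).1 + epsf (S n).1 / (1 - lam)) :=
          mul_le_mul_of_nonneg_left ih2 h0.le
        have halg : epsf (S n).1 + lam * (lam ^ (S n).2.1 * Bf lam (S n).1 + epsf (S n).1 / (1 - lam))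
            = lam ^ ((S n).2.1 + 1) * Bf lam (S n).1 + epsf (S n).1 / (1 - lam) := by
          field_simp
          ring
        linarith
      by_cases hcond : (S n).2.1 + 1 = T (S n).1
      · have hs : S (n+1) = ((S n).1 + 1, 0, (S n).2.2 + e (pick (S n).1 (S n).2.2)) := by
          rw [hstep n, if_pos hcond]
        rw [hs]
        constructor
        · exact lt_of_lt_of_le Nat.zero_lt_one (hT1 _)
        · show d (z ((S n).1 + 1)) ((S n).2.2 + e (pick (S n).1 (S n).2.2)) ≤
            lam ^ (0:ℕ) * Bf lam ((S n).1 + 1) + epsf ((S n).1 + 1) / (1 - lam)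
          have hx : d (z (S n).1) ((S n).2.2 + e (pick (S n).1 (S n).2.2)) ≤
              2 * (epsf (S n).1 / (1 - lam)) := by
            rw [hcond] at hd2
            have := hT2 (S n).1
            linarith
          have hzz : d (z ((S n).1 + 1)) (z (S n).1) ≤ 2 * (epsf (S n).1 / (1 - lam)) := by
            have hsep := sep (z ((S n).1 + 1)) (z (S n).1)
            have e1 := (hz ((S n).1 + 1)).le
            have e2 := (hz (S n).1).le
            have e3 := epsf_succ_le (S n).1
            have hnum : rho d (z ((S n).1 + 1)) + rho d (z (S n).1) ≤
                2 * epsf (S n).1 := by linarith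
            have hdiv : (rho d (z ((S n).1 + 1)) + rho d (z (S n).1)) / (1 - lam) ≤
                2 * epsf (S n).1 / (1 - lam) := by
              exact (div_le_div_iff_of_pos_right hlam1).mpr hnum
            calc d (z ((S n).1 + 1)) (z (S n).1)
                ≤ (rho d (z ((S n).1 + 1)) + rho d (z (S n).1)) / (1 - lam) := hsep
              _ ≤ 2 * epsf (S n).1 / (1 - lam) := hdiv
              _ = 2 * (epsf (S n).1 / (1 - lam)) := by ring
          have htri : d (z ((S n).1 + 1)) ((S n).2.2 + e (pick (S n).1 (S n).2.2)) ≤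
              d (z ((S n).1 + 1)) (z (S n).1) +
                d (z (S n).1) ((S n).2.2 + e (pick (S n).1 (S n).2.2)) := dtri _ _ _
          have hBf : Bf lam ((S n).1 + 1) = 4 * epsf (S n).1 / (1 - lam) := rfl
          have he2 : 0 ≤ epsf ((S n).1 + 1) / (1 - lam) := by
            have := epsf_pos ((S n).1 + 1)
            positivity
          have : lam ^ (0:ℕ) * Bf lam ((S n).1 + 1) = 4 * epsf (S n).1 / (1 - lam) := by
            rw [hBf]; ring
          rw [this]
          have : 4 * epsf (S n).1 / (1 - lam) = 4 * (epsf (S n).1 / (1 - lam)) := by ring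
          rw [this]
          linarith
      · have hs : S (n+1) = ((S n).1, (S n).2.1 + 1, (S n).2.2 + e (pick (S n).1 (S n).2.2)) := by
          rw [hstep n, if_neg hcond]
        rw [hs]
        exact ⟨lt_of_le_of_ne ih1 hcond, hd2⟩
  -- phase index facts
  have kmono1 : ∀ n, (S n).1 ≤ (S (n+1)).1 := by
    intro n
    rw [hstep n]
    split
    · exact Nat.le_succ _
    · exact le_refl _
  have kmono : ∀ m n, m ≤ n → (S m).1 ≤ (S n).1 := by
    intro m n h
    induction n with
    | zero =>
      have hm0 : m = 0 := Nat.le_zero.mp h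
      subst hm0
      exact le_refl _
    | succ n ihn =>
      rcases Nat.lt_or_ge m (n+1) with hlt | hge
      · exact le_trans (ihn (by omega)) (kmono1 n)
      · have : m = n + 1 := by omega
        subst this; exact le_refl _
  have tstay : ∀ n, (S n).2.1 + 1 ≠ T (S n).1 →
      (S (n+1)).1 = (S n).1 ∧ (S (n+1)).2.1 = (S n).2.1 + 1 := by
    intro n hcond
    rw [hstep n, if_neg hcond]
    exact ⟨rfl, rfl⟩
  have tswitch : ∀ n, (S n).2.1 + 1 = T (S n).1 → (S (n+1)).1 = (S n).1 + 1 := by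
    intro n hcond
    rw [hstep n, if_pos hcond]
  have advance : ∀ μ n, T (S n).1 - (S n).2.1 ≤ μ → ∃ m, (S n).1 + 1 ≤ (S m).1 := by
    intro μ
    induction μ with
    | zero =>
      intro n hn
      exact absurd hn (by have := (inv n).1; omega)
    | succ μ ih =>
      intro n hn
      by_cases hcond : (S n).2.1 + 1 = T (S n).1
      · exact ⟨n+1, by rw [tswitch n hcond]⟩
      · obtain ⟨h1', h2'⟩ := tstay n hcond
        obtain ⟨m, hm⟩ := ih (n+1) (by rw [h1', h2']; omega)
        exact ⟨m, by rw [h1'] at hm; exact hm⟩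
  have unbdd : ∀ K, ∃ N, K ≤ (S N).1 := by
    intro K
    induction K with
    | zero => exact ⟨0, Nat.zero_le _⟩
    | succ K ih =>
      obtain ⟨N, hN⟩ := ih
      obtain ⟨m, hm⟩ := advance (T (S N).1 - (S N).2.1) N le_rfl
      exact ⟨m, by omega⟩
  -- final sequence
  refine ⟨fun n => (S n).2.2, ?_, ?_⟩
  · intro n
    refine ⟨pick (S n).1 (S n).2.2, ?_⟩
    show (S (n+1)).2.2 = (S n).2.2 + e (pick (S n).1 (S n).2.2)
    rw [hstep n]
    split
    · rfl
    · rfl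
  · intro ε hε
    have hεl : 0 < ε * (1 - lam) / 14 := by positivity
    obtain ⟨K1, hK1⟩ := exists_pow_lt_of_lt_one hεl (by norm_num : (1/2:ℝ) < 1)
    obtain ⟨N, hN⟩ := unbdd (K1 + 1)
    refine ⟨N, ?_⟩
    have key : ∀ p, N ≤ p → d (z (K1 + 1)) ((S p).2.2) ≤ 7 * (epsf K1 / (1 - lam)) := by
      intro p hp
      have hk : K1 + 1 ≤ (S p).1 := le_trans hN (kmono N p hp)
      obtain ⟨j, hj⟩ : ∃ j, (S p).1 = j + 1 := by
        cases hkp : (S p).1 with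
        | zero => omega
        | succ j => exact ⟨j, rfl⟩
      have hjK : K1 ≤ j := by omega
      have hinv := (inv p).2
      rw [hj] at hinv
      have hBj : Bf lam (j+1) = 4 * epsf j / (1 - lam) := rfl
      have hpow : lam ^ (S p).2.1 ≤ 1 :=
        pow_le_one₀ h0.le h1.le
      have hBnn : 0 ≤ Bf lam (j+1) := (Bpos (j+1)).le
      have hmul2 : lam ^ (S p).2.1 * Bf lam (j+1) ≤ Bf lam (j+1) := by
        nlinarith
      -- distance from z (K1+1) to z (j+1)
      have hzz : d (z (K1+1)) (z (j+1)) ≤ 2 * (epsf K1 / (1 - lam)) := by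
        have hsep := sep (z (K1+1)) (z (j+1))
        have e1 := (hz (K1+1)).le
        have e2 := (hz (j+1)).le
        have e3 : epsf (K1+1) ≤ epsf K1 := epsf_succ_le K1
        have e4 : epsf (j+1) ≤ epsf K1 := epsf_anti (by omega)
        have hnum : rho d (z (K1+1)) + rho d (z (j+1)) ≤ 2 * epsf K1 := by linarith
        have hdiv : (rho d (z (K1+1)) + rho d (z (j+1))) / (1 - lam) ≤
            2 * epsf K1 / (1 - lam) := (div_le_div_iff_of_pos_right hlam1).mpr hnum
        calc d (z (K1+1)) (z (j+1))
            ≤ (rho d (z (K1+1)) + rho d (z (j+1))) / (1 - lam) := hsep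
          _ ≤ 2 * epsf K1 / (1 - lam) := hdiv
          _ = 2 * (epsf K1 / (1 - lam)) := by ring
      -- distance from z (j+1) to current point
      have hcur : d (z (j+1)) ((S p).2.2) ≤ 5 * (epsf K1 / (1 - lam)) := by
        have e4 : epsf (j+1) ≤ epsf K1 := epsf_anti (by omega)
        have e5 : epsf j ≤ epsf K1 := epsf_anti hjK
        have hBle : Bf lam (j+1) ≤ 4 * (epsf K1 / (1 - lam)) := by
          rw [hBj]
          have ha : 4 * epsf j / (1 - lam) ≤ 4 * epsf K1 / (1 - lam) :=
            (div_le_div_iff_of_pos_right hlam1).mpr (by linarith)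
          have hb : 4 * epsf K1 / (1 - lam) = 4 * (epsf K1 / (1 - lam)) := by ring
          linarith
        have hE : epsf (j+1) / (1 - lam) ≤ epsf K1 / (1 - lam) :=
          (div_le_div_iff_of_pos_right hlam1).mpr e4
        linarith
      have htri : d (z (K1+1)) ((S p).2.2) ≤
          d (z (K1+1)) (z (j+1)) + d (z (j+1)) ((S p).2.2) := dtri _ _ _
      linarith
    intro m hm n hn
    have t1 := key m hm
    have t2 := key n hn
    have htri : d ((S m).2.2) ((S n).2.2) ≤
        d ((S m).2.2) (z (K1+1)) + d (z (K1+1)) ((S n).2.2) := dtri _ _ _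
    have hsym : d ((S m).2.2) (z (K1+1)) = d (z (K1+1)) ((S m).2.2) := dsymm _ _
    have hfin : 14 * (epsf K1 / (1 - lam)) < ε := by
      have hE : epsf K1 < ε * (1 - lam) / 14 := hK1
      have h14 : 14 * epsf K1 < ε * (1 - lam) := by linarith
      rw [show (14:ℝ) * (epsf K1 / (1 - lam)) = 14 * epsf K1 / (1 - lam) from by ring,
        div_lt_iff₀ hlam1]
      exact h14
    linarith
end

section
/- Suppose that for every choice of basepoint p₀ in a complete metric space X with a commuting λ-contractive family {f₁,f₂,f₃} of continuous maps, the induced pseudometric space (ℕ₀³, d) with d(a,b) = d_X(a(p₀), b(p₀)) contains a Cauchy sequence (xₙ) with x_{n+1} − xₙ ∈ {e₁,e₂,e₃}. Then some fᵢ has a fixed point in X. -/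
theorem stmt6 {X : Type*} [MetricSpace X] [CompleteSpace X] [Nonempty X]
    (lam : ℝ) (h0 : 0 < lam) (h1 : lam < 1)
    (f : Fin 3 → X → X) (hcont : ∀ i, Continuous (f i))
    (hcomm : ∀ i j, f i ∘ f j = f j ∘ f i)
    (hcontr : ∀ x y : X, ∃ i, dist (f i x) (f i y) ≤ lam * dist x y)
    (hgrid : ∀ p₀ : X, ∃ s : ℕ → Grid, OneWay s ∧
      IsCauchySeq (fun a b : Grid =>
        dist ((f 0)^[a 0] ((f 1)^[a 1] ((f 2)^[a 2] p₀)))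
             ((f 0)^[b 0] ((f 1)^[b 1] ((f 2)^[b 2] p₀)))) s) :
    ∃ (i : Fin 3) (x : X), f i x = x := by
  obtain ⟨p₀⟩ := ‹Nonempty X›
  obtain ⟨s, hone, hcauchy⟩ := hgrid p₀
  set φ : Grid → X := fun a => (f 0)^[a 0] ((f 1)^[a 1] ((f 2)^[a 2] p₀)) with hφ
  have hcomm' : ∀ i j (n : ℕ) (x : X), f i ((f j)^[n] x) = (f j)^[n] (f i x) := by
    intro i j n x
    have h : Function.Commute (f i) (f j) := fun y => congrFun (hcomm i j) y
    exact (h.iterate_right n) x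
  have hstep : ∀ (a : Grid) (i : Fin 3), φ (a + e i) = f i (φ a) := by
    intro a i
    fin_cases i
    · show φ (a + e 0) = f 0 (φ a)
      have h0 : (a + e 0) 0 = a 0 + 1 := by simp [e]
      have h1 : (a + e 0) 1 = a 1 := by simp [e]
      have h2 : (a + e 0) 2 = a 2 := by simp [e]
      simp only [hφ, h0, h1, h2, Function.iterate_succ_apply']
    · show φ (a + e 1) = f 1 (φ a)
      have h0 : (a + e 1) 0 = a 0 := by simp [e]
      have h1 : (a + e 1) 1 = a 1 + 1 := by simp [e]
      have h2 : (a + e 1) 2 = a 2 := by simp [e]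
      simp only [hφ, h0, h1, h2, Function.iterate_succ_apply']
      rw [hcomm' 1 0]
    · show φ (a + e 2) = f 2 (φ a)
      have h0 : (a + e 2) 0 = a 0 := by simp [e]
      have h1 : (a + e 2) 1 = a 1 := by simp [e]
      have h2 : (a + e 2) 2 = a 2 + 1 := by simp [e]
      simp only [hφ, h0, h1, h2, Function.iterate_succ_apply']
      rw [hcomm' 2 0, hcomm' 2 1]
  set u : ℕ → X := fun n => φ (s n) with hu
  have hcs : CauchySeq u := by
    rw [Metric.cauchySeq_iff]
    intro ε hε
    obtain ⟨N, hN⟩ := hcauchy ε hε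
    exact ⟨N, fun m hm n hn => hN m hm n hn⟩
  obtain ⟨x, hx⟩ := cauchySeq_tendsto_of_complete hcs
  choose dir hdir using hone
  obtain ⟨i, hi⟩ := Finite.exists_infinite_fiber dir
  have hinf : (setOf fun n => dir n = i).Infinite := Set.infinite_coe_iff.mp hi
  have hmono := Nat.nth_strictMono hinf
  have t1 : Filter.Tendsto (fun k => u (Nat.nth (fun n => dir n = i) k)) Filter.atTop (nhds x) :=
    hx.comp hmono.tendsto_atTop
  have hmono1 : StrictMono (fun k => Nat.nth (fun n => dir n = i) k + 1) :=
    fun a b h => by simpa using hmono h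
  have t2 : Filter.Tendsto (fun k => u (Nat.nth (fun n => dir n = i) k + 1))
      Filter.atTop (nhds x) := hx.comp hmono1.tendsto_atTop
  have key : ∀ k, u (Nat.nth (fun n => dir n = i) k + 1)
      = f i (u (Nat.nth (fun n => dir n = i) k)) := by
    intro k
    have hp : dir (Nat.nth (fun n => dir n = i) k) = i := Nat.nth_mem_of_infinite hinf k
    show φ (s (Nat.nth (fun n => dir n = i) k + 1)) = f i (φ (s (Nat.nth (fun n => dir n = i) k)))
    rw [hdir, hp, hstep]
  have t3 : Filter.Tendsto (fun k => u (Nat.nth (fun n => dir n = i) k + 1))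
      Filter.atTop (nhds (f i x)) := by
    simp only [key]
    exact ((hcont i).tendsto x).comp t1
  exact ⟨i, x, tendsto_nhds_unique t3 t2⟩
end

section
/- Consider any 3-coloring c of the edges of the complete graph on vertex set ℕ, i.e. c : {unordered pairs of distinct naturals} → {1,2,3}. Then there exist sets A, B ⊆ ℕ with A ∪ B = ℕ and colors c_A, c_B ∈ {1,2,3} such that the subgraph of edges of color c_A induced on A has diameter at most 8, and the subgraph of edges of color c_B induced on B has diameter at most 8 (diameter measured in the graph metric of the monochromatic induced subgraph). -/
open SimpleGraph

private abbrev GS (c : ℕ → ℕ → Fin 3) (S : Set ℕ) (i : Fin 3) : SimpleGraph ℕ :=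
  SimpleGraph.fromRel (fun u v => u ∈ S ∧ v ∈ S ∧ c u v = i)

private lemma adj_GS {c : ℕ → ℕ → Fin 3} {S : Set ℕ} {i : Fin 3} {a b : ℕ}
    (hab : a ≠ b) (ha : a ∈ S) (hb : b ∈ S) (hc : c a b = i) : (GS c S i).Adj a b :=
  (SimpleGraph.fromRel_adj _ a b).mpr ⟨hab, Or.inl ⟨ha, hb, hc⟩⟩

private lemma walk_transfer {c : ℕ → ℕ → Fin 3} {S : Set ℕ} {i : Fin 3} {u v : ℕ}
    (p : (GS c Set.univ i).Walk u v) (hs : ∀ x ∈ p.support, x ∈ S) :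
    ∃ q : (GS c S i).Walk u v, q.length = p.length := by
  induction p with
  | nil => exact ⟨.nil, rfl⟩
  | @cons a b w h p ih =>
    obtain ⟨q, hq⟩ := ih (fun x hx => hs x (by simp [SimpleGraph.Walk.support_cons, hx]))
    obtain ⟨hne, hr⟩ := (SimpleGraph.fromRel_adj _ a b).mp h
    have ha : a ∈ S := hs a (by simp)
    have hb : b ∈ S := hs b (by simp [SimpleGraph.Walk.support_cons])
    refine ⟨.cons ((SimpleGraph.fromRel_adj _ a b).mpr ⟨hne, ?_⟩) q, by simp [hq]⟩
    rcases hr with h' | h'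
    · exact Or.inl ⟨ha, hb, h'.2.2⟩
    · exact Or.inr ⟨hb, ha, h'.2.2⟩

private lemma center_lemma {c : ℕ → ℕ → Fin 3} {S : Set ℕ} {i : Fin 3} {x : ℕ}
    (h : ∀ a ∈ S, ∃ w : (GS c S i).Walk a x, w.length ≤ 4) :
    ∀ a ∈ S, ∀ b ∈ S, (GS c S i).Reachable a b ∧ (GS c S i).dist a b ≤ 8 := by
  intro a ha b hb
  obtain ⟨wa, hwa⟩ := h a ha
  obtain ⟨wb, hwb⟩ := h b hb
  refine ⟨⟨wa.append wb.reverse⟩, ?_⟩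
  have h1 := SimpleGraph.dist_le (wa.append wb.reverse)
  rw [SimpleGraph.Walk.length_append, SimpleGraph.Walk.length_reverse] at h1
  omega

private lemma three : ∀ (a b : Fin 3), a ≠ b →
    ∃ i, i ≠ a ∧ i ≠ b ∧ ∀ x : Fin 3, x = i ∨ x = a ∨ x = b := by decide

theorem stmt7 (c : ℕ → ℕ → Fin 3) (hsymm : ∀ a b, c a b = c b a) :
    ∃ (A B : Set ℕ) (cA cB : Fin 3),
      A ∪ B = Set.univ ∧
      (∀ a ∈ A, ∀ b ∈ A,
        (SimpleGraph.fromRel (fun u v => u ∈ A ∧ v ∈ A ∧ c u v = cA)).Reachable a b ∧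
        (SimpleGraph.fromRel (fun u v => u ∈ A ∧ v ∈ A ∧ c u v = cA)).dist a b ≤ 8) ∧
      (∀ a ∈ B, ∀ b ∈ B,
        (SimpleGraph.fromRel (fun u v => u ∈ B ∧ v ∈ B ∧ c u v = cB)).Reachable a b ∧
        (SimpleGraph.fromRel (fun u v => u ∈ B ∧ v ∈ B ∧ c u v = cB)).dist a b ≤ 8) := by
  classical
  by_cases H : ∃ (k : Fin 3) (u v : ℕ), ¬ ∃ p : (GS c Set.univ k).Walk u v, p.length ≤ 8
  · obtain ⟨k, u, v, Hk⟩ := H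
    have huv : u ≠ v := by
      rintro rfl
      exact Hk ⟨.nil, by simp⟩
    have hγk : c u v ≠ k := by
      intro h
      exact Hk ⟨.cons (adj_GS huv (Set.mem_univ u) (Set.mem_univ v) h) .nil, by simp⟩
    obtain ⟨i, hiγ, hik, hall⟩ := three (c u v) k hγk
    by_cases h6 : ∃ p : (GS c Set.univ i).Walk u v, p.length ≤ 3
    · -- case 2a : there is an i-walk from u to v of length ≤ 3
      obtain ⟨p, hp⟩ := h6
      refine ⟨{w : ℕ | w = u ∨ w = v ∨ c w u = i ∨ c w v = i ∨ w ∈ p.support},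
        {w : ℕ | w = u ∨ w = v ∨ c w u = c u v ∨ c w v = c u v}, i, c u v, ?_, ?_, ?_⟩
      · -- union
        apply Set.eq_univ_of_forall
        intro w
        by_contra hcon
        simp only [Set.mem_union, Set.mem_setOf_eq, not_or] at hcon
        obtain ⟨⟨hwu, hwv, h1, h2, _⟩, ⟨_, _, h3, h4⟩⟩ := hcon
        have hu : c w u = k := by rcases hall (c w u) with h | h | h <;> simp_all
        have hv : c w v = k := by rcases hall (c w v) with h | h | h <;> simp_all
        refine Hk ⟨.cons (adj_GS (Ne.symm hwu) trivial trivial ?_)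
          (.cons (adj_GS hwv trivial trivial hv) .nil), by simp⟩
        rw [hsymm]; exact hu
      · -- A
        intro a ha b hb
        refine center_lemma (x := u) ?_ a ha b hb
        intro a ha
        have hAu : u ∈ {w : ℕ | w = u ∨ w = v ∨ c w u = i ∨ c w v = i ∨ w ∈ p.support} :=
          Or.inl rfl
        have hAv : v ∈ {w : ℕ | w = u ∨ w = v ∨ c w u = i ∨ c w v = i ∨ w ∈ p.support} :=
          Or.inr (Or.inl rfl)
        obtain ⟨q, hq⟩ := walk_transfer
          (S := {w : ℕ | w = u ∨ w = v ∨ c w u = i ∨ c w v = i ∨ w ∈ p.support}) p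
          (fun x hx => Or.inr (Or.inr (Or.inr (Or.inr hx))))
        by_cases hau : a = u
        · subst hau; exact ⟨.nil, by simp⟩
        by_cases hav : a = v
        · subst hav
          refine ⟨q.reverse, ?_⟩
          rw [SimpleGraph.Walk.length_reverse]; omega
        rcases ha with rfl | rfl | h | h | h
        · exact absurd rfl hau
        · exact absurd rfl hav
        · exact ⟨.cons (adj_GS hau (Or.inr (Or.inr (Or.inl h))) hAu h) .nil, by simp⟩
        · refine ⟨.cons (adj_GS hav (Or.inr (Or.inr (Or.inr (Or.inl h)))) hAv h) q.reverse, ?_⟩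
          simp only [SimpleGraph.Walk.length_cons, SimpleGraph.Walk.length_reverse]
          omega
        · obtain ⟨q2, hq2⟩ := walk_transfer (p.takeUntil a h)
            (fun x hx => Or.inr (Or.inr (Or.inr (Or.inr
              (SimpleGraph.Walk.support_takeUntil_subset p h hx)))))
          refine ⟨q2.reverse, ?_⟩
          have h3 := SimpleGraph.Walk.length_takeUntil_le p h
          rw [SimpleGraph.Walk.length_reverse]
          omega
      · -- B
        intro a ha b hb
        refine center_lemma (x := u) ?_ a ha b hb
        intro a ha
        have hBu : u ∈ {w : ℕ | w = u ∨ w = v ∨ c w u = c u v ∨ c w v = c u v} := Or.inl rfl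
        have hBv : v ∈ {w : ℕ | w = u ∨ w = v ∨ c w u = c u v ∨ c w v = c u v} :=
          Or.inr (Or.inl rfl)
        have evu : (GS c {w : ℕ | w = u ∨ w = v ∨ c w u = c u v ∨ c w v = c u v}
            (c u v)).Adj v u := adj_GS (Ne.symm huv) hBv hBu (hsymm v u)
        by_cases hau : a = u
        · subst hau; exact ⟨.nil, by simp⟩
        by_cases hav : a = v
        · subst hav; exact ⟨.cons evu .nil, by simp⟩
        rcases ha with rfl | rfl | h | h
        · exact absurd rfl hau
        · exact absurd rfl hav
        · exact ⟨.cons (adj_GS hau (Or.inr (Or.inr (Or.inl h))) hBu h) .nil, by simp⟩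
        · exact ⟨.cons (adj_GS hav (Or.inr (Or.inr (Or.inr h))) hBv h) (.cons evu .nil),
            by simp⟩
    · -- case 2b : no i-walk of length ≤ 3
      set P : Set ℕ := {w : ℕ | w ≠ u ∧ w ≠ v ∧ c w u = i ∧ c w v = k} with hPdef
      set Q : Set ℕ := {w : ℕ | w ≠ u ∧ w ≠ v ∧ c w u = k ∧ c w v = i} with hQdef
      set B : Set ℕ := {w : ℕ | w = u ∨ w = v ∨ c w u = c u v ∨ c w v = c u v} with hBdef
      have hcov : ∀ w, w ∈ B ∨ w ∈ P ∨ w ∈ Q := by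
        intro w
        by_cases hwu : w = u
        · exact Or.inl (Or.inl hwu)
        by_cases hwv : w = v
        · exact Or.inl (Or.inr (Or.inl hwv))
        rcases hall (c w u) with h1 | h1 | h1
        · rcases hall (c w v) with h2 | h2 | h2
          · exfalso
            refine h6 ⟨.cons (adj_GS (Ne.symm hwu) trivial trivial ?_)
              (.cons (adj_GS hwv trivial trivial h2) .nil), by simp⟩
            rw [hsymm]; exact h1
          · exact Or.inl (Or.inr (Or.inr (Or.inr h2)))
          · exact Or.inr (Or.inl ⟨hwu, hwv, h1, h2⟩)
        · exact Or.inl (Or.inr (Or.inr (Or.inl h1)))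
        · rcases hall (c w v) with h2 | h2 | h2
          · exact Or.inr (Or.inr ⟨hwu, hwv, h1, h2⟩)
          · exact Or.inl (Or.inr (Or.inr (Or.inr h2)))
          · exfalso
            refine Hk ⟨.cons (adj_GS (Ne.symm hwu) trivial trivial ?_)
              (.cons (adj_GS hwv trivial trivial h2) .nil), by simp⟩
            rw [hsymm]; exact h1
      have hBgood : ∀ a ∈ B, ∀ b ∈ B, (GS c B (c u v)).Reachable a b ∧
          (GS c B (c u v)).dist a b ≤ 8 := by
        apply center_lemma (x := u)
        intro a ha
        have hBu : u ∈ B := Or.inl rfl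
        have hBv : v ∈ B := Or.inr (Or.inl rfl)
        have evu : (GS c B (c u v)).Adj v u := adj_GS (Ne.symm huv) hBv hBu (hsymm v u)
        by_cases hau : a = u
        · subst hau; exact ⟨.nil, by simp⟩
        by_cases hav : a = v
        · subst hav; exact ⟨.cons evu .nil, by simp⟩
        rcases ha with rfl | rfl | h | h
        · exact absurd rfl hau
        · exact absurd rfl hav
        · exact ⟨.cons (adj_GS hau (Or.inr (Or.inr (Or.inl h))) hBu h) .nil, by simp⟩
        · exact ⟨.cons (adj_GS hav (Or.inr (Or.inr (Or.inr h))) hBv h) (.cons evu .nil),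
            by simp⟩
      by_cases hP : P.Nonempty
      · by_cases hQ : Q.Nonempty
        · -- both nonempty : A = P ∪ Q with color c u v
          obtain ⟨w₁, hw₁⟩ := hP
          obtain ⟨w₂, hw₂⟩ := hQ
          have hforce : ∀ a ∈ P, ∀ b ∈ Q, c a b = c u v := by
            rintro a ⟨hau, hav, hai, hak⟩ b ⟨hbu, hbv, hbk, hbi⟩
            have hab : a ≠ b := by
              rintro rfl
              rw [hai] at hbk
              exact hik hbk
            rcases hall (c a b) with h | h | h
            · exfalso
              refine h6 ⟨.cons (adj_GS (Ne.symm hau) trivial trivial ?_)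
                (.cons (adj_GS hab trivial trivial h)
                  (.cons (adj_GS hbv trivial trivial hbi) .nil)), by simp⟩
              rw [hsymm]; exact hai
            · exact h
            · exfalso
              refine Hk ⟨.cons (adj_GS (Ne.symm hbu) trivial trivial ?_)
                (.cons (adj_GS (Ne.symm hab) trivial trivial ?_)
                  (.cons (adj_GS hav trivial trivial hak) .nil)), by simp⟩
              · rw [hsymm]; exact hbk
              · rw [hsymm]; exact h
          have hPQne : ∀ a ∈ P, ∀ b ∈ Q, a ≠ b := by
            rintro a ⟨_, _, hai, _⟩ b ⟨_, _, hbk, _⟩ rfl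
            rw [hai] at hbk
            exact hik hbk
          refine ⟨P ∪ Q, B, c u v, c u v, ?_, ?_, fun a ha b hb => hBgood a ha b hb⟩
          · apply Set.eq_univ_of_forall
            intro w
            rcases hcov w with h | h | h
            · exact Or.inr h
            · exact Or.inl (Or.inl h)
            · exact Or.inl (Or.inr h)
          · intro a ha b hb
            refine center_lemma (x := w₁) ?_ a ha b hb
            intro a ha
            have hmw₁ : w₁ ∈ P ∪ Q := Or.inl hw₁
            have hmw₂ : w₂ ∈ P ∪ Q := Or.inr hw₂
            have e21 : (GS c (P ∪ Q) (c u v)).Adj w₂ w₁ := by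
              refine adj_GS (Ne.symm (hPQne w₁ hw₁ w₂ hw₂)) hmw₂ hmw₁ ?_
              rw [hsymm]; exact hforce w₁ hw₁ w₂ hw₂
            rcases ha with ha | ha
            · by_cases haw : a = w₁
              · subst haw; exact ⟨.nil, by simp⟩
              · exact ⟨.cons (adj_GS (hPQne a ha w₂ hw₂) (Or.inl ha) hmw₂
                  (hforce a ha w₂ hw₂)) (.cons e21 .nil), by simp⟩
            · refine ⟨.cons (adj_GS (Ne.symm (hPQne w₁ hw₁ a ha)) (Or.inr ha) hmw₁ ?_)
                .nil, by simp⟩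
              rw [hsymm]; exact hforce w₁ hw₁ a ha
        · -- Q empty : A = k-star at v
          refine ⟨{w : ℕ | w = v ∨ c w v = k}, B, k, c u v, ?_, ?_,
            fun a ha b hb => hBgood a ha b hb⟩
          · apply Set.eq_univ_of_forall
            intro w
            rcases hcov w with h | h | h
            · exact Or.inr h
            · exact Or.inl (Or.inr h.2.2.2)
            · exact absurd ⟨w, h⟩ hQ
          · intro a ha b hb
            refine center_lemma (x := v) ?_ a ha b hb
            intro a ha
            have hAv : v ∈ {w : ℕ | w = v ∨ c w v = k} := Or.inl rfl
            by_cases hav : a = v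
            · subst hav; exact ⟨.nil, by simp⟩
            rcases ha with rfl | h
            · exact absurd rfl hav
            · exact ⟨.cons (adj_GS hav (Or.inr h) hAv h) .nil, by simp⟩
      · -- P empty : A = k-star at u
        refine ⟨{w : ℕ | w = u ∨ c w u = k}, B, k, c u v, ?_, ?_,
          fun a ha b hb => hBgood a ha b hb⟩
        · apply Set.eq_univ_of_forall
          intro w
          rcases hcov w with h | h | h
          · exact Or.inr h
          · exact absurd ⟨w, h⟩ hP
          · exact Or.inl (Or.inr h.2.2.1)
        · intro a ha b hb
          refine center_lemma (x := u) ?_ a ha b hb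
          intro a ha
          have hAu : u ∈ {w : ℕ | w = u ∨ c w u = k} := Or.inl rfl
          by_cases hau : a = u
          · subst hau; exact ⟨.nil, by simp⟩
          rcases ha with rfl | h
          · exact absurd rfl hau
          · exact ⟨.cons (adj_GS hau (Or.inr h) hAu h) .nil, by simp⟩
  · -- every pair is joined by a short walk in every color
    push_neg at H
    refine ⟨Set.univ, Set.univ, 0, 0, by simp, ?_, ?_⟩ <;>
    · intro a _ b _
      obtain ⟨p, hp⟩ := H 0 a b
      exact ⟨⟨p⟩, le_trans (SimpleGraph.dist_le p) hp⟩
end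

section
/- Let β ∈ ℕ₀³ and let T(β) = {β + k : k ∈ ℕ₀³}. Let c : T(β) → {1,2,3} be a coloring such that (1) for every z ∈ T(β), either c(z+e₁) = 1 or c(z+e₂) = 2, and (2) for every z,t ∈ T(β) whose neighborhoods N(z), N(t) take only colors 1 and 2, there exists i ∈ [3] with c(z+eᵢ) = c(t+eᵢ). Then there is a translated octant T(γ) ⊆ T(β) which is entirely colored 1 or entirely colored 2. -/
private def pt (o : Grid) (a b d : ℕ) : Grid :=
  fun j => o j + if j = 0 then a else if j = 1 then b else d

private lemma pt_e0 (o : Grid) (a b d : ℕ) : pt o a b d + e 0 = pt o (a+1) b d := by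
  funext j; fin_cases j <;> simp [pt, e] <;> omega

private lemma pt_e1 (o : Grid) (a b d : ℕ) : pt o a b d + e 1 = pt o a (b+1) d := by
  funext j; fin_cases j <;> simp [pt, e] <;> omega

private lemma pt_e2 (o : Grid) (a b d : ℕ) : pt o a b d + e 2 = pt o a b (d+1) := by
  funext j; fin_cases j <;> simp [pt, e] <;> omega

private lemma fin3cases (v : Fin 3) : v = 0 ∨ v = 1 ∨ v = 2 := by revert v; decide

private lemma bichrom_of (c : Grid → Fin 3) (z : Grid)
    (H0 : c (z + e 0) = 0 ∨ c (z + e 0) = 1)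
    (H1 : c (z + e 1) = 0 ∨ c (z + e 1) = 1)
    (H2 : c (z + e 2) = 0 ∨ c (z + e 2) = 1) :
    ∀ i : Fin 3, c (z + e i) = 0 ∨ c (z + e i) = 1 := by
  intro i; fin_cases i
  · exact H0
  · exact H1
  · exact H2

private lemma agree3 (c : Grid → Fin 3) (z t : Grid)
    (h : ∃ i : Fin 3, c (z + e i) = c (t + e i)) :
    c (z + e 0) = c (t + e 0) ∨ c (z + e 1) = c (t + e 1) ∨ c (z + e 2) = c (t + e 2) := by
  obtain ⟨i, hi⟩ := h; fin_cases i
  exacts [Or.inl hi, Or.inr (Or.inl hi), Or.inr (Or.inr hi)]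

private lemma pt_ge {β o : Grid} (ho : ∀ j, β j ≤ o j) (a b d : ℕ) :
    ∀ j, β j ≤ pt o a b d j := fun j => le_trans (ho j) (Nat.le_add_right _ _)

private lemma noTwo (β : Grid) (c : Grid → Fin 3)
    (h1 : ∀ z : Grid, (∀ j, β j ≤ z j) → c (z + e 0) = 0 ∨ c (z + e 1) = 1)
    (h2 : ∀ z t : Grid, (∀ j, β j ≤ z j) → (∀ j, β j ≤ t j) →
      (∀ i : Fin 3, c (z + e i) = 0 ∨ c (z + e i) = 1) →
      (∀ i : Fin 3, c (t + e i) = 0 ∨ c (t + e i) = 1) →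
      ∃ i : Fin 3, c (z + e i) = c (t + e i))
    (o : Grid) (ho : ∀ j, β j ≤ o j) (hy : c (pt o 5 5 5) = 2) : False := by
  have H1 : ∀ a b d : ℕ, c (pt o (a+1) b d) = 0 ∨ c (pt o a (b+1) d) = 1 := by
    intro a b d
    have h := h1 (pt o a b d) (pt_ge ho a b d)
    rwa [pt_e0, pt_e1] at h
  have H2 : ∀ a b d a' b' d' : ℕ,
      (c (pt o (a+1) b d) = 0 ∨ c (pt o (a+1) b d) = 1) →
      (c (pt o a (b+1) d) = 0 ∨ c (pt o a (b+1) d) = 1) →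
      (c (pt o a b (d+1)) = 0 ∨ c (pt o a b (d+1)) = 1) →
      (c (pt o (a'+1) b' d') = 0 ∨ c (pt o (a'+1) b' d') = 1) →
      (c (pt o a' (b'+1) d') = 0 ∨ c (pt o a' (b'+1) d') = 1) →
      (c (pt o a' b' (d'+1)) = 0 ∨ c (pt o a' b' (d'+1)) = 1) →
      (c (pt o (a+1) b d) = c (pt o (a'+1) b' d') ∨
       c (pt o a (b+1) d) = c (pt o a' (b'+1) d') ∨
       c (pt o a b (d+1)) = c (pt o a' b' (d'+1))) := by
    intro a b d a' b' d' p0 p1 p2 q0 q1 q2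
    have h := h2 (pt o a b d) (pt o a' b' d') (pt_ge ho a b d) (pt_ge ho a' b' d')
      (bichrom_of c _ (by rw [pt_e0]; exact p0) (by rw [pt_e1]; exact p1) (by rw [pt_e2]; exact p2))
      (bichrom_of c _ (by rw [pt_e0]; exact q0) (by rw [pt_e1]; exact q1) (by rw [pt_e2]; exact q2))
    have h3 := agree3 c _ _ h
    rwa [pt_e0 o a b d, pt_e1 o a b d, pt_e2 o a b d,
         pt_e0 o a' b' d', pt_e1 o a' b' d', pt_e2 o a' b' d'] at h3
  -- the antidiagonal line through the 2-point y = (5,5,5): 1s to the upper-left, 0s to the lower-right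
  have r1 : c (pt o 4 6 5) = 1 := by
    rcases H1 4 5 5 with h | h
    · exact absurd (show c (pt o 5 5 5) = 0 from h) (by rw [hy]; decide)
    · exact h
  have r2 : c (pt o 3 7 5) = 1 := by
    rcases H1 3 6 5 with h | h
    · exact absurd (show c (pt o 4 6 5) = 0 from h) (by rw [r1]; decide)
    · exact h
  have r3 : c (pt o 2 8 5) = 1 := by
    rcases H1 2 7 5 with h | h
    · exact absurd (show c (pt o 3 7 5) = 0 from h) (by rw [r2]; decide)
    · exact h
  have l0 : c (pt o 6 4 5) = 0 := by
    rcases H1 5 4 5 with h | h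
    · exact h
    · exact absurd (show c (pt o 5 5 5) = 1 from h) (by rw [hy]; decide)
  have l1 : c (pt o 7 3 5) = 0 := by
    rcases H1 6 3 5 with h | h
    · exact h
    · exact absurd (show c (pt o 6 4 5) = 1 from h) (by rw [l0]; decide)
  have l2 : c (pt o 8 2 5) = 0 := by
    rcases H1 7 2 5 with h | h
    · exact h
    · exact absurd (show c (pt o 7 3 5) = 1 from h) (by rw [l1]; decide)
  have l3 : c (pt o 9 1 5) = 0 := by
    rcases H1 8 1 5 with h | h
    · exact h
    · exact absurd (show c (pt o 8 2 5) = 1 from h) (by rw [l2]; decide)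
  -- left flank: a bichromatic point with colours (0,0,w)
  have hL : ∃ a b : ℕ, c (pt o (a+1) b 5) = 0 ∧ c (pt o a (b+1) 5) = 0 ∧
      (c (pt o a b 6) = 0 ∨ c (pt o a b 6) = 1) := by
    rcases fin3cases (c (pt o 8 1 6)) with h | h | h
    · exact ⟨8, 1, l3, l2, Or.inl h⟩
    · exact ⟨8, 1, l3, l2, Or.inr h⟩
    · have h72 : c (pt o 7 2 6) = 1 := by
        rcases H1 7 1 6 with h' | h'
        · exact absurd (show c (pt o 8 1 6) = 0 from h') (by rw [h]; decide)
        · exact h'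
      exact ⟨7, 2, l2, l1, Or.inr h72⟩
  -- right flank: a bichromatic point with colours (1,1,v)
  have hR : ∃ a b : ℕ, c (pt o (a+1) b 5) = 1 ∧ c (pt o a (b+1) 5) = 1 ∧
      (c (pt o a b 6) = 0 ∨ c (pt o a b 6) = 1) := by
    rcases fin3cases (c (pt o 3 6 6)) with h | h | h
    · exact ⟨3, 6, r1, r2, Or.inl h⟩
    · exact ⟨3, 6, r1, r2, Or.inr h⟩
    · have h27 : c (pt o 2 7 6) = 1 := by
        rcases H1 2 6 6 with h' | h'
        · exact absurd (show c (pt o 3 6 6) = 0 from h') (by rw [h]; decide)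
        · exact h'
      exact ⟨2, 7, r2, r3, Or.inr h27⟩
  obtain ⟨aL, bL, hL0, hL1, hLw⟩ := hL
  obtain ⟨aR, bR, hR0, hR1, hRw⟩ := hR
  have huv : c (pt o aL bL 6) = c (pt o aR bR 6) := by
    rcases H2 aL bL 5 aR bR 5 (Or.inl hL0) (Or.inl hL1) hLw
      (Or.inr hR0) (Or.inr hR1) hRw with h | h | h
    · rw [hL0, hR0] at h; exact absurd h (by decide)
    · rw [hL1, hR1] at h; exact absurd h (by decide)
    · exact h
  rcases hLw with hw | hw
  · -- u = 0
    have hv : c (pt o aR bR 6) = 0 := by rw [← huv]; exact hw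
    have C00 : ∀ a b : ℕ, c (pt o (a+1) b 4) = 0 → c (pt o a (b+1) 4) = 0 →
        c (pt o a b 5) = 1 → False := by
      intro a b p0 p1 p2
      rcases H2 a b 4 aR bR 5 (Or.inl p0) (Or.inl p1) (Or.inr p2)
        (Or.inr hR0) (Or.inr hR1) (Or.inl hv) with h | h | h
      · rw [p0, hR0] at h; exact absurd h (by decide)
      · rw [p1, hR1] at h; exact absurd h (by decide)
      · have h' : c (pt o a b 5) = c (pt o aR bR 6) := h
        rw [p2, hv] at h'; exact absurd h' (by decide)
    have C11 : ∀ a b : ℕ, c (pt o (a+1) b 4) = 1 → c (pt o a (b+1) 4) = 1 →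
        c (pt o a b 5) = 1 → False := by
      intro a b p0 p1 p2
      rcases H2 a b 4 aL bL 5 (Or.inr p0) (Or.inr p1) (Or.inr p2)
        (Or.inl hL0) (Or.inl hL1) (Or.inl hw) with h | h | h
      · rw [p0, hL0] at h; exact absurd h (by decide)
      · rw [p1, hL1] at h; exact absurd h (by decide)
      · have h' : c (pt o a b 5) = c (pt o aL bL 6) := h
        rw [p2, hw] at h'; exact absurd h' (by decide)
    rcases H1 4 6 4 with h6 | h7
    · rcases H1 3 7 4 with h7' | h8
      · exact C00 4 6 h6 h7' r1
      · rcases H1 2 8 4 with h8' | h9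
        · have hx : c (pt o 3 8 4) = 0 := h8'
          have hx' : c (pt o 3 8 4) = 1 := h8
          rw [hx] at hx'; exact absurd hx' (by decide)
        · exact C11 2 8 h8 h9 r3
    · rcases H1 3 7 4 with h7' | h8
      · have hx : c (pt o 4 7 4) = 0 := h7'
        have hx' : c (pt o 4 7 4) = 1 := h7
        rw [hx] at hx'; exact absurd hx' (by decide)
      · exact C11 3 7 h7 h8 r2
  · -- u = 1
    have hv : c (pt o aR bR 6) = 1 := by rw [← huv]; exact hw
    have C00 : ∀ a b : ℕ, c (pt o (a+1) b 4) = 0 → c (pt o a (b+1) 4) = 0 →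
        c (pt o a b 5) = 0 → False := by
      intro a b p0 p1 p2
      rcases H2 a b 4 aR bR 5 (Or.inl p0) (Or.inl p1) (Or.inl p2)
        (Or.inr hR0) (Or.inr hR1) (Or.inr hv) with h | h | h
      · rw [p0, hR0] at h; exact absurd h (by decide)
      · rw [p1, hR1] at h; exact absurd h (by decide)
      · have h' : c (pt o a b 5) = c (pt o aR bR 6) := h
        rw [p2, hv] at h'; exact absurd h' (by decide)
    have C11 : ∀ a b : ℕ, c (pt o (a+1) b 4) = 1 → c (pt o a (b+1) 4) = 1 →
        c (pt o a b 5) = 0 → False := by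
      intro a b p0 p1 p2
      rcases H2 a b 4 aL bL 5 (Or.inr p0) (Or.inr p1) (Or.inl p2)
        (Or.inl hL0) (Or.inl hL1) (Or.inr hw) with h | h | h
      · rw [p0, hL0] at h; exact absurd h (by decide)
      · rw [p1, hL1] at h; exact absurd h (by decide)
      · have h' : c (pt o a b 5) = c (pt o aL bL 6) := h
        rw [p2, hw] at h'; exact absurd h' (by decide)
    rcases H1 9 1 4 with h1' | h2'
    · rcases H1 8 2 4 with h2'' | h3
      · exact C00 9 1 h1' h2'' l3
      · rcases H1 7 3 4 with h3' | h4
        · have hx : c (pt o 8 3 4) = 0 := h3'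
          have hx' : c (pt o 8 3 4) = 1 := h3
          rw [hx] at hx'; exact absurd hx' (by decide)
        · exact C11 7 3 h3 h4 l1
    · rcases H1 8 2 4 with h2'' | h3
      · have hx : c (pt o 9 2 4) = 0 := h2''
        have hx' : c (pt o 9 2 4) = 1 := h2'
        rw [hx] at hx'; exact absurd hx' (by decide)
      · exact C11 8 2 h2' h3 l2

/-- Colours 1, 2, 3 of the paper correspond to `0, 1, 2 : Fin 3`. -/
theorem stmt9 (β : Grid) (c : Grid → Fin 3)
    (h1 : ∀ z : Grid, (∀ j, β j ≤ z j) → c (z + e 0) = 0 ∨ c (z + e 1) = 1)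
    (h2 : ∀ z t : Grid, (∀ j, β j ≤ z j) → (∀ j, β j ≤ t j) →
      (∀ i : Fin 3, c (z + e i) = 0 ∨ c (z + e i) = 1) →
      (∀ i : Fin 3, c (t + e i) = 0 ∨ c (t + e i) = 1) →
      ∃ i : Fin 3, c (z + e i) = c (t + e i)) :
    ∃ γ : Grid, (∀ j, β j ≤ γ j) ∧
      ((∀ k : Grid, c (γ + k) = 0) ∨ (∀ k : Grid, c (γ + k) = 1)) := by
  by_contra hcon
  push_neg at hcon
  -- no point at depth ≥ 5 has colour 2
  have reg01 : ∀ x : Grid, (∀ j, β j + 5 ≤ x j) → c x = 0 ∨ c x = 1 := by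
    intro x hx
    rcases fin3cases (c x) with h | h | h
    · exact Or.inl h
    · exact Or.inr h
    · exfalso
      have hpt : pt (fun j => x j - 5) 5 5 5 = x := by
        funext j
        have := hx j
        simp only [pt, ite_self]
        omega
      refine noTwo β c h1 h2 (fun j => x j - 5) (fun j => ?_) (by rw [hpt]; exact h)
      show β j ≤ x j - 5
      have := hx j; omega
  have regβ : ∀ {x : Grid}, (∀ j, β j + 5 ≤ x j) → (∀ j, β j ≤ x j) :=
    fun hx j => by have := hx j; omega
  have regsucc : ∀ (i : Fin 3) {x : Grid}, (∀ j, β j + 5 ≤ x j) →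
      (∀ j, β j + 5 ≤ (x + e i) j) :=
    fun i _ hx j => le_trans (hx j) (Nat.le_add_right _ _)
  have bich : ∀ x : Grid, (∀ j, β j + 5 ≤ x j) →
      ∀ i : Fin 3, c (x + e i) = 0 ∨ c (x + e i) = 1 :=
    fun x hx i => reg01 _ (regsucc i hx)
  -- cofinal points with both first two successors coloured 1
  have getZ : ∀ γ : Grid, (∀ j, β j + 5 ≤ γ j) →
      ∃ z : Grid, (∀ j, γ j ≤ z j) ∧ c (z + e 0) = 1 ∧ c (z + e 1) = 1 := by
    intro γ hγ
    obtain ⟨k, hk⟩ := (hcon (γ + e 0)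
      (fun j => le_trans (show β j ≤ γ j by have := hγ j; omega) (Nat.le_add_right _ _))).1
    rw [add_right_comm] at hk
    have hzreg : ∀ j, β j + 5 ≤ (γ + k) j := fun j => le_trans (hγ j) (Nat.le_add_right _ _)
    have hz0 : c (γ + k + e 0) = 1 := by
      rcases reg01 _ (regsucc 0 hzreg) with h | h
      · exact absurd h hk
      · exact h
    have hz1 : c (γ + k + e 1) = 1 := by
      rcases h1 (γ + k) (regβ hzreg) with h | h
      · exact absurd h hk
      · exact h
    exact ⟨γ + k, fun j => Nat.le_add_right _ _, hz0, hz1⟩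
  -- cofinal points with both first two successors coloured 0
  have getT : ∀ γ : Grid, (∀ j, β j + 5 ≤ γ j) →
      ∃ z : Grid, (∀ j, γ j ≤ z j) ∧ c (z + e 0) = 0 ∧ c (z + e 1) = 0 := by
    intro γ hγ
    obtain ⟨k, hk⟩ := (hcon (γ + e 1)
      (fun j => le_trans (show β j ≤ γ j by have := hγ j; omega) (Nat.le_add_right _ _))).2
    rw [add_right_comm] at hk
    have hzreg : ∀ j, β j + 5 ≤ (γ + k) j := fun j => le_trans (hγ j) (Nat.le_add_right _ _)
    have hz1 : c (γ + k + e 1) = 0 := by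
      rcases reg01 _ (regsucc 1 hzreg) with h | h
      · exact h
      · exact absurd h hk
    have hz0 : c (γ + k + e 0) = 0 := by
      rcases h1 (γ + k) (regβ hzreg) with h | h
      · exact h
      · exact absurd h hk
    exact ⟨γ + k, fun j => Nat.le_add_right _ _, hz0, hz1⟩
  have hδreg : ∀ j, β j + 5 ≤ (fun j => β j + 5 : Grid) j := fun j => le_refl _
  obtain ⟨zs, hzsge, hzs0, hzs1⟩ := getZ (fun j => β j + 5) hδreg
  obtain ⟨ts, htsge, hts0, hts1⟩ := getT (fun j => β j + 5) hδreg
  have hzsreg : ∀ j, β j + 5 ≤ zs j := hzsge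
  have htsreg : ∀ j, β j + 5 ≤ ts j := htsge
  have hts2 := reg01 _ (regsucc 2 htsreg)
  have hu : c (zs + e 2) = c (ts + e 2) := by
    rcases agree3 c zs ts (h2 zs ts (regβ hzsreg) (regβ htsreg)
        (bich zs hzsreg) (bich ts htsreg)) with h | h | h
    · rw [hzs0, hts0] at h; exact absurd h (by decide)
    · rw [hzs1, hts1] at h; exact absurd h (by decide)
    · exact h
  have RuleZ : ∀ z : Grid, (∀ j, β j + 5 ≤ z j) → c (z + e 0) = 1 →
      c (z + e 1) = 1 ∧ c (z + e 2) = c (ts + e 2) := by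
    intro z hz hz0
    have hz1' : c (z + e 1) = 1 := by
      rcases h1 z (regβ hz) with h | h
      · rw [hz0] at h; exact absurd h (by decide)
      · exact h
    refine ⟨hz1', ?_⟩
    rcases agree3 c z ts (h2 z ts (regβ hz) (regβ htsreg)
        (bich z hz) (bich ts htsreg)) with h | h | h
    · rw [hz0, hts0] at h; exact absurd h (by decide)
    · rw [hz1', hts1] at h; exact absurd h (by decide)
    · exact h
  have RuleT : ∀ z : Grid, (∀ j, β j + 5 ≤ z j) → c (z + e 1) = 0 →
      c (z + e 0) = 0 ∧ c (z + e 2) = c (ts + e 2) := by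
    intro z hz hz1'
    have hz0' : c (z + e 0) = 0 := by
      rcases h1 z (regβ hz) with h | h
      · exact h
      · rw [hz1'] at h; exact absurd h (by decide)
    refine ⟨hz0', ?_⟩
    rcases agree3 c z zs (h2 z zs (regβ hz) (regβ hzsreg)
        (bich z hz) (bich zs hzsreg)) with h | h | h
    · rw [hz0', hzs0] at h; exact absurd h (by decide)
    · rw [hz1', hzs1] at h; exact absurd h (by decide)
    · exact h.trans hu
  rcases hts2 with hu0 | hu1
  · -- the common third colour u is 0
    have hzs2' : c (zs + e 2) = 0 := hu.trans hu0
    have RuleV : ∀ z : Grid, (∀ j, β j + 5 ≤ z j) → c (z + e 2) = 1 →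
        c (z + e 0) = 0 ∧ c (z + e 1) = 1 := by
      intro z hz hz2
      rcases reg01 _ (regsucc 0 hz) with hp0 | hp1
      · refine ⟨hp0, ?_⟩
        rcases agree3 c z zs (h2 z zs (regβ hz) (regβ hzsreg)
            (bich z hz) (bich zs hzsreg)) with h | h | h
        · rw [hp0, hzs0] at h; exact absurd h (by decide)
        · rw [hzs1] at h; exact h
        · rw [hz2, hzs2'] at h; exact absurd h (by decide)
      · exfalso
        have hq1 : c (z + e 1) = 1 := by
          rcases h1 z (regβ hz) with h | h
          · rw [hp1] at h; exact absurd h (by decide)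
          · exact h
        rcases agree3 c z ts (h2 z ts (regβ hz) (regβ htsreg)
            (bich z hz) (bich ts htsreg)) with h | h | h
        · rw [hp1, hts0] at h; exact absurd h (by decide)
        · rw [hq1, hts1] at h; exact absurd h (by decide)
        · rw [hz2, hu0] at h; exact absurd h (by decide)
    obtain ⟨z0, hz0ge, hz00, hz01⟩ :=
      getZ (fun j => β j + 7) (fun j => by show β j + 5 ≤ β j + 7; omega)
    have hz07 : ∀ j, β j + 7 ≤ z0 j := hz0ge
    set o : Grid := fun j => z0 j - 2 with hodef
    have hpt222 : pt o 2 2 2 = z0 := by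
      funext j
      have := hz07 j
      simp only [pt, ite_self]
      show z0 j - 2 + 2 = z0 j
      omega
    have hor : ∀ a b d : ℕ, ∀ j, β j + 5 ≤ pt o a b d j := by
      intro a b d j
      have h7 := hz07 j
      exact le_trans (show β j + 5 ≤ o j by show β j + 5 ≤ z0 j - 2; omega)
        (Nat.le_add_right _ _)
    have k322 : c (pt o 3 2 2) = 1 := by
      have h := hz00
      rw [← hpt222, pt_e0] at h
      exact h
    have k232 : c (pt o 2 3 2) = 1 := by
      have h := hz01
      rw [← hpt222, pt_e1] at h
      exact h
    have hstep : c (pt o 3 3 1) = 1 := by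
      have h := (RuleV (pt o 3 2 1) (hor 3 2 1) (by rw [pt_e2]; exact k322)).2
      rw [pt_e1] at h
      exact h
    have hbad := (RuleZ (pt o 2 3 1) (hor 2 3 1) (by rw [pt_e0]; exact hstep)).2
    rw [pt_e2, hu0] at hbad
    have hbad' : c (pt o 2 3 2) = 0 := hbad
    rw [k232] at hbad'
    exact absurd hbad' (by decide)
  · -- the common third colour u is 1
    have hzs2' : c (zs + e 2) = 1 := hu.trans hu1
    have RuleW : ∀ z : Grid, (∀ j, β j + 5 ≤ z j) → c (z + e 2) = 0 →
        c (z + e 0) = 0 ∧ c (z + e 1) = 1 := by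
      intro z hz hz2
      rcases reg01 _ (regsucc 0 hz) with hp0 | hp1
      · refine ⟨hp0, ?_⟩
        rcases agree3 c z zs (h2 z zs (regβ hz) (regβ hzsreg)
            (bich z hz) (bich zs hzsreg)) with h | h | h
        · rw [hp0, hzs0] at h; exact absurd h (by decide)
        · rw [hzs1] at h; exact h
        · rw [hz2, hzs2'] at h; exact absurd h (by decide)
      · exfalso
        have hq1 : c (z + e 1) = 1 := by
          rcases h1 z (regβ hz) with h | h
          · rw [hp1] at h; exact absurd h (by decide)
          · exact h
        rcases agree3 c z ts (h2 z ts (regβ hz) (regβ htsreg)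
            (bich z hz) (bich ts htsreg)) with h | h | h
        · rw [hp1, hts0] at h; exact absurd h (by decide)
        · rw [hq1, hts1] at h; exact absurd h (by decide)
        · rw [hz2, hu1] at h; exact absurd h (by decide)
    obtain ⟨t0, ht0ge, ht00, ht01⟩ :=
      getT (fun j => β j + 7) (fun j => by show β j + 5 ≤ β j + 7; omega)
    have ht07 : ∀ j, β j + 7 ≤ t0 j := ht0ge
    set o : Grid := fun j => t0 j - 2 with hodef
    have hpt222 : pt o 2 2 2 = t0 := by
      funext j
      have := ht07 j
      simp only [pt, ite_self]
      show t0 j - 2 + 2 = t0 j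
      omega
    have hor : ∀ a b d : ℕ, ∀ j, β j + 5 ≤ pt o a b d j := by
      intro a b d j
      have h7 := ht07 j
      exact le_trans (show β j + 5 ≤ o j by show β j + 5 ≤ t0 j - 2; omega)
        (Nat.le_add_right _ _)
    have k322 : c (pt o 3 2 2) = 0 := by
      have h := ht00
      rw [← hpt222, pt_e0] at h
      exact h
    have k232 : c (pt o 2 3 2) = 0 := by
      have h := ht01
      rw [← hpt222, pt_e1] at h
      exact h
    have hstep : c (pt o 3 3 1) = 0 := by
      have h := (RuleW (pt o 2 3 1) (hor 2 3 1) (by rw [pt_e2]; exact k232)).1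
      rw [pt_e0] at h
      exact h
    have hbad := (RuleT (pt o 3 2 1) (hor 3 2 1) (by rw [pt_e1]; exact hstep)).2
    rw [pt_e2, hu1] at hbad
    have hbad' : c (pt o 3 2 2) = 1 := hbad
    rw [k322] at hbad'
    exact absurd hbad' (by decide)
end

section
/- Let d be a pseudometric on ℕ₀³ with λ ∈ (0, 1/3) satisfying the coordinatewise λ-contraction property. Let {i₁,i₂,i₃} = {1,2,3} and let S = {α + m·e_{i₁} + n·e_{i₂} : m,n ∈ ℕ₀} be a quarter-plane of diameter D, with R = inf_{s∈S} ρ(s). If D(1−λ²) < (1−4λ)R, then there exists a 3-way set (a translated octant β + ℕ₀³) of diameter at most 2λ( (2/(1−λ))D + ((1+2λ)/(1−λ))R ). -/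
/-!
Lift the quarter-plane `S` in the remaining direction `i₃`, so that `S + c • e i₃` is the
`c`-th layer. Horizontal steps inside `S` have length at most `D < R` while `ρ ≥ R` on `S`, so
every vertical edge leaving `S` has length at least `R`. A pair `(x, t)` with `t ∈ S` whose
horizontal translates stay farther apart than `λ d x t` (as they do, the vertical edges at
`t + e j` being long) must therefore contract vertically. Applied at a point of `S` whose vertical
edge is nearly `R`, this bounds the diameter of layer 1 by `2λ(R + D)` and every vertical edge
leaving `S` by `K = (1 + λ)D + (1 + 2λ)R`. Applied layer by layer, the distance from layer `n + 1`
to layer 1 obeys `aₙ₊₁ = λ(aₙ + K)`, and the distance along a column obeys the same recursion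
started at `0`; the closed form of the sum of the two bounds the octant above layer 1 by
`2λK / (1 - λ)`.
-/

theorem exists_third_dir {i₁ i₂ : Fin 3} (h : i₁ ≠ i₂) :
    ∃ i₃ : Fin 3, (∀ j ≠ i₃, j = i₁ ∨ j = i₂) ∧
      ∀ k : Grid, k = k i₁ • e i₁ + k i₂ • e i₂ + k i₃ • e i₃ := by
  obtain ⟨i₃, h₁₃, h₂₃, hcover⟩ :
      ∃ i₃ : Fin 3, i₁ ≠ i₃ ∧ i₂ ≠ i₃ ∧ ∀ j, j = i₁ ∨ j = i₂ ∨ j = i₃ := by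
    revert i₁ i₂; decide
  refine ⟨i₃, fun j hj => (hcover j).imp_right (Or.resolve_right · hj), fun k => funext fun j => ?_⟩
  rcases hcover j with rfl | rfl | rfl <;>
    simp [e, h, h₁₃, h₂₃, h.symm, h₁₃.symm, h₂₃.symm]

def quarterPlane (α : Grid) (i₁ i₂ : Fin 3) : Set Grid :=
  {s | ∃ m n : ℕ, s = α + m • e i₁ + n • e i₂}

theorem add_e_mem_quarterPlane {α s : Grid} {i₁ i₂ j : Fin 3} (hj : j = i₁ ∨ j = i₂)
    (hs : s ∈ quarterPlane α i₁ i₂) : s + e j ∈ quarterPlane α i₁ i₂ := by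
  obtain ⟨m, n, rfl⟩ := hs
  rcases hj with rfl | rfl
  · exact ⟨m + 1, n, by rw [succ_nsmul]; abel⟩
  · exact ⟨m, n + 1, by rw [succ_nsmul]; abel⟩

theorem exists_add_nsmul_eq {i₁ i₂ i₃ : Fin 3}
    (hdecomp : ∀ k : Grid, k = k i₁ • e i₁ + k i₂ • e i₂ + k i₃ • e i₃) (α k : Grid) :
    ∃ s ∈ quarterPlane α i₁ i₂, ∃ c : ℕ, α + e i₃ + k = s + (c + 1) • e i₃ := by
  refine ⟨_, ⟨k i₁, k i₂, rfl⟩, k i₃, ?_⟩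
  conv_lhs => rw [hdecomp k]
  rw [succ_nsmul]
  abel

namespace Pseudo

variable {d : Grid → Grid → ℝ}

theorem nonneg (hd : Pseudo d) (x y : Grid) : 0 ≤ d x y := hd.2.1 x y

theorem symm (hd : Pseudo d) (x y : Grid) : d x y = d y x := hd.2.2.1 x y

theorem triangle (hd : Pseudo d) (x y z : Grid) : d x z ≤ d x y + d y z := hd.2.2.2 x y z

end Pseudo

theorem dist_add_e_le_rho (d : Grid → Grid → ℝ) (x : Grid) (j : Fin 3) :
    d x (x + e j) ≤ rho d x := by
  fin_cases j <;> simp [rho]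

theorem rho_lt_of_forall {d : Grid → Grid → ℝ} {x : Grid} {c : ℝ}
    (h : ∀ j, d x (x + e j) < c) : rho d x < c :=
  max_lt (h 0) (max_lt (h 1) (h 2))

theorem Contractive.dist_add_e_le_of_forall_ne {d : Grid → Grid → ℝ} {lam : ℝ}
    (hc : Contractive d lam) {x y : Grid} {i : Fin 3}
    (h : ∀ j ≠ i, lam * d x y < d (x + e j) (y + e j)) :
    d (x + e i) (y + e i) ≤ lam * d x y := by
  obtain ⟨j, hj⟩ := hc x y
  by_cases hji : j = i
  · exact hji ▸ hj
  · exact absurd hj (h j hji).not_ge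

section GLB

variable {d : Grid → Grid → ℝ} {S : Set Grid} {D R : ℝ}

theorem le_dist_add_e_of_isGLB {i : Fin 3} (hS : ∀ j ≠ i, ∀ s ∈ S, s + e j ∈ S)
    (hdiam : ∀ s ∈ S, ∀ t ∈ S, d s t ≤ D) (hDR : D < R) (hR : IsGLB (rho d '' S) R)
    {s : Grid} (hs : s ∈ S) : R ≤ d s (s + e i) := by
  by_contra! hlt
  refine (hR.1 ⟨s, hs, rfl⟩).not_gt (rho_lt_of_forall fun j => ?_)
  by_cases hj : j = i
  · exact hj ▸ hlt
  · exact (hdiam s hs _ (hS j hj s hs)).trans_lt hDR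

theorem exists_dist_add_e_lt_of_isGLB (hR : IsGLB (rho d '' S) R) (i : Fin 3) {r : ℝ}
    (hr : R < r) : ∃ s ∈ S, d s (s + e i) < r := by
  obtain ⟨_, ⟨s, hs, rfl⟩, -, hlt⟩ := hR.exists_between hr
  exact ⟨s, hs, (dist_add_e_le_rho d s i).trans_lt hlt⟩

end GLB

noncomputable def layerBound (lam K a : ℝ) (n : ℕ) : ℝ := (fun x => lam * (x + K))^[n] a

section layerBound

variable {lam K a : ℝ}

@[simp]
theorem layerBound_zero : layerBound lam K a 0 = a := rfl

theorem layerBound_succ (n : ℕ) :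
    layerBound lam K a (n + 1) = lam * (layerBound lam K a n + K) :=
  Function.iterate_succ_apply' _ _ _

theorem layerBound_mul_one_sub_sub (n : ℕ) :
    layerBound lam K a n * (1 - lam) - lam * K = lam ^ n * (a * (1 - lam) - lam * K) := by
  induction n with
  | zero => simp
  | succ n ih => rw [layerBound_succ, pow_succ]; linear_combination lam * ih

theorem monotone_layerBound_step (hlam : 0 ≤ lam) : Monotone fun x => lam * (x + K) :=
  fun _ _ h => mul_le_mul_of_nonneg_left (by linarith) hlam

theorem layerBound_mono (hlam : 0 ≤ lam) {b : ℝ} (hab : a ≤ b) (n : ℕ) :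
    layerBound lam K a n ≤ layerBound lam K b n :=
  (monotone_layerBound_step hlam).iterate n hab

theorem antitone_layerBound (hlam : 0 ≤ lam) (h : lam * (a + K) ≤ a) :
    Antitone (layerBound lam K a) :=
  (monotone_layerBound_step hlam).antitone_iterate_of_map_le h

end layerBound

theorem four_mul_lt_one {lam D R : ℝ} (hlam : lam < 1 / 3) (hD : 0 ≤ D) (hR : 0 ≤ R)
    (hcond : D * (1 - lam ^ 2) < (1 - 4 * lam) * R) : 4 * lam < 1 := by
  by_contra! h
  nlinarith [mul_nonneg hD (by nlinarith : (0 : ℝ) ≤ 1 - lam ^ 2),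
    mul_nonneg (by linarith : (0 : ℝ) ≤ 4 * lam - 1) hR]

theorem mul_one_add_lt_mul_one_sub {lam D R : ℝ} (hlam : 0 < lam) (hlam₄ : 4 * lam < 1)
    (hD : 0 ≤ D) (hcond : D * (1 - lam ^ 2) < (1 - 4 * lam) * R) :
    D * (1 + lam) < R * (1 - lam) := by
  have hR : 0 < R :=
    pos_of_mul_pos_right (by nlinarith [mul_nonneg hD (by nlinarith : (0 : ℝ) ≤ 1 - lam ^ 2)])
      (by linarith : (0 : ℝ) ≤ 1 - 4 * lam)
  have key : 0 < (1 - lam) * (R * (1 - lam) - D * (1 + lam)) := by nlinarith [mul_pos hR hlam]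
  linarith [pos_of_mul_pos_right key (by linarith)]

structure IsFloor (d : Grid → Grid → ℝ) (lam : ℝ) (i : Fin 3) (S : Set Grid) (R : ℝ) : Prop where
  pseudo : Pseudo d
  contractive : Contractive d lam
  add_e_mem : ∀ j ≠ i, ∀ s ∈ S, s + e j ∈ S
  le_dist_add_e : ∀ s ∈ S, R ≤ d s (s + e i)

namespace IsFloor

open Filter Topology

variable {d : Grid → Grid → ℝ} {lam R D K a : ℝ} {i : Fin 3} {S : Set Grid}

theorem layer_one_bounds_of_anchor (F : IsFloor d lam i S R) (hlam : 0 ≤ lam) (hD : 0 ≤ D)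
    (hdiam : ∀ s ∈ S, ∀ t ∈ S, d s t ≤ D) {s₀ : Grid} (hs₀ : s₀ ∈ S) {r : ℝ}
    (hr : d s₀ (s₀ + e i) ≤ r) (hsmall : lam * (r + D) + D < R) :
    (∀ s ∈ S, ∀ t ∈ S, d (s + e i) (t + e i) ≤ 2 * lam * (r + D)) ∧
      ∀ s ∈ S, d s (s + e i) ≤ (1 + lam) * D + (1 + 2 * lam) * r := by
  have hd := F.pseudo
  have hlr : lam * r ≤ lam * (r + D) := mul_le_mul_of_nonneg_left (by linarith) hlam
  have hcol : d (s₀ + e i) (s₀ + e i + e i) ≤ lam * r := by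
    refine (F.contractive.dist_add_e_le_of_forall_ne fun j hj => ?_).trans
      (mul_le_mul_of_nonneg_left hr hlam)
    have hv := F.le_dist_add_e _ (F.add_e_mem j hj s₀ hs₀)
    rw [add_right_comm s₀ (e j) (e i)] at hv
    linarith [mul_le_mul_of_nonneg_left hr hlam]
  have htop : ∀ t ∈ S, d (s₀ + e i + e i) (t + e i) ≤ lam * (r + D) := by
    intro t ht
    have hxt : d (s₀ + e i) t ≤ r + D := by
      linarith [hd.triangle (s₀ + e i) s₀ t, hd.symm (s₀ + e i) s₀, hdiam s₀ hs₀ t ht]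
    refine (F.contractive.dist_add_e_le_of_forall_ne fun j hj => ?_).trans
      (mul_le_mul_of_nonneg_left hxt hlam)
    have hu := F.add_e_mem j hj s₀ hs₀
    have hv := F.le_dist_add_e _ hu
    rw [add_right_comm s₀ (e j) (e i)] at hv
    linarith [hd.triangle (s₀ + e j) (t + e j) (s₀ + e i + e j),
      hd.symm (t + e j) (s₀ + e i + e j), hdiam _ hu _ (F.add_e_mem j hj t ht),
      mul_le_mul_of_nonneg_left hxt hlam]
  constructor
  · intro s hs t ht
    linarith [hd.triangle (s + e i) (s₀ + e i + e i) (t + e i),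
      hd.symm (s + e i) (s₀ + e i + e i), htop s hs, htop t ht]
  · intro s hs
    linarith [hd.triangle s s₀ (s + e i), hd.triangle s₀ (s₀ + e i) (s + e i),
      hd.triangle (s₀ + e i) (s₀ + e i + e i) (s + e i), hd.symm (s₀ + e i + e i) (s + e i),
      hdiam s hs s₀ hs₀, htop s hs]

theorem layer_one_bounds (F : IsFloor d lam i S R) (hlam : 0 ≤ lam) (hD : 0 ≤ D)
    (hdiam : ∀ s ∈ S, ∀ t ∈ S, d s t ≤ D) (hanchor : ∀ r > R, ∃ s ∈ S, d s (s + e i) < r)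
    (hsmall : lam * (R + D) + D < R) :
    (∀ s ∈ S, ∀ t ∈ S, d (s + e i) (t + e i) ≤ 2 * lam * (R + D)) ∧
      ∀ s ∈ S, d s (s + e i) ≤ (1 + lam) * D + (1 + 2 * lam) * R := by
  have hnear : ∀ᶠ r in 𝓝[>] R, lam * (r + D) + D < R :=
    nhdsWithin_le_nhds <| (by fun_prop : Continuous fun r => lam * (r + D) + D).continuousAt
      |>.eventually (gt_mem_nhds hsmall)
  -- the bounds of the anchored version, for `r` slightly above `R`, are continuous in `r`
  have hbounds := (hnear.and self_mem_nhdsWithin).mono fun r ⟨hr, hRr⟩ => by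
    obtain ⟨s₀, hs₀, hlt⟩ := hanchor r hRr
    exact F.layer_one_bounds_of_anchor hlam hD hdiam hs₀ hlt.le hr
  constructor
  · intro s hs t ht
    exact ge_of_tendsto (by fun_prop : Continuous fun r => 2 * lam * (r + D)).continuousWithinAt
      (hbounds.mono fun r h => h.1 s hs t ht)
  · intro s hs
    exact ge_of_tendsto
      (by fun_prop : Continuous fun r => (1 + lam) * D + (1 + 2 * lam) * r).continuousWithinAt
      (hbounds.mono fun r h => h.2 s hs)

theorem dist_succ_layer_le (F : IsFloor d lam i S R) (hlam : 0 ≤ lam) {c : ℕ} {a b : ℝ}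
    (hK : ∀ s ∈ S, d s (s + e i) ≤ K) (ha : ∀ s ∈ S, ∀ t ∈ S, d (s + c • e i) (t + e i) ≤ a)
    {s t : Grid} (hs : s ∈ S) (ht : t ∈ S) (hb : d (s + c • e i) (t + e i) ≤ b)
    (hsmall : lam * (b + K) + a < R) :
    d (s + (c + 1) • e i) (t + e i) ≤ lam * (b + K) := by
  have hd := F.pseudo
  have hxt : d (s + c • e i) t ≤ b + K := by
    linarith [hd.triangle (s + c • e i) (t + e i) t, hd.symm (t + e i) t, hK t ht]
  rw [succ_nsmul, ← add_assoc]
  refine (F.contractive.dist_add_e_le_of_forall_ne fun j hj => ?_).trans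
    (mul_le_mul_of_nonneg_left hxt hlam)
  have hv := F.le_dist_add_e _ (F.add_e_mem j hj t ht)
  have hup := ha _ (F.add_e_mem j hj s hs) _ (F.add_e_mem j hj t ht)
  rw [add_right_comm s (e j)] at hup
  linarith [hd.triangle (t + e j) (s + c • e i + e j) (t + e j + e i),
    hd.symm (t + e j) (s + c • e i + e j), mul_le_mul_of_nonneg_left hxt hlam]

theorem layer_bounds (F : IsFloor d lam i S R) (hlam : 0 ≤ lam) (ha : 0 ≤ a)
    (hK : ∀ s ∈ S, d s (s + e i) ≤ K) (h₁ : ∀ s ∈ S, ∀ t ∈ S, d (s + e i) (t + e i) ≤ a)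
    (hfix : lam * (a + K) ≤ a) (hsmall : (1 + lam) * a + lam * K < R) (n : ℕ) :
    (∀ s ∈ S, ∀ t ∈ S, d (s + (n + 1) • e i) (t + e i) ≤ layerBound lam K a n) ∧
      ∀ s ∈ S, d (s + (n + 1) • e i) (s + e i) ≤ layerBound lam K 0 n := by
  induction n with
  | zero => simpa using ⟨h₁, fun s _ => (F.pseudo.1 (s + e i)).le⟩
  | succ n ih =>
    have han : layerBound lam K a n ≤ a := antitone_layerBound hlam hfix (Nat.zero_le n)
    have hhn : layerBound lam K 0 n ≤ layerBound lam K a n := layerBound_mono hlam ha n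
    rw [layerBound_succ, layerBound_succ]
    refine ⟨fun s hs t ht => F.dist_succ_layer_le hlam hK ih.1 hs ht (ih.1 s hs t ht) ?_,
      fun s hs => F.dist_succ_layer_le hlam hK ih.1 hs hs (ih.2 s hs) ?_⟩
    · linarith [mul_le_mul_of_nonneg_left han hlam]
    · linarith [mul_le_mul_of_nonneg_left (hhn.trans han) hlam]

theorem dist_layers_mul_le (F : IsFloor d lam i S R) (hlam : 0 ≤ lam) (ha : 0 ≤ a)
    (hK : ∀ s ∈ S, d s (s + e i) ≤ K) (h₁ : ∀ s ∈ S, ∀ t ∈ S, d (s + e i) (t + e i) ≤ a)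
    (hfix : lam * (a + K) ≤ a) (hsmall : (1 + lam) * a + lam * K < R)
    (hsum : a * (1 - lam) ≤ 2 * lam * K) (hlam₁ : lam < 1) {s t : Grid} (hs : s ∈ S)
    (ht : t ∈ S) (m n : ℕ) :
    d (s + (m + 1) • e i) (t + (n + 1) • e i) * (1 - lam) ≤ 2 * lam * K := by
  wlog hmn : m ≤ n generalizing s t m n
  · rw [F.pseudo.symm]; exact this ht hs n m (by omega)
  have hd := F.pseudo
  have hbounds := F.layer_bounds hlam ha hK h₁ hfix hsmall
  have hpath : d (s + (m + 1) • e i) (t + (n + 1) • e i) ≤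
      layerBound lam K 0 m + layerBound lam K a m := by
    have hdesc := antitone_layerBound hlam hfix hmn
    linarith [hd.triangle (s + (m + 1) • e i) (s + e i) (t + (n + 1) • e i),
      hd.symm (s + e i) (t + (n + 1) • e i), (hbounds m).2 s hs, (hbounds n).1 t ht s hs]
  -- the closed form gives `(layerBound 0 m + layerBound a m) (1 - λ) - 2λK = λᵐ (a (1 - λ) - 2λK)`
  have hclosed₀ := layerBound_mul_one_sub_sub (lam := lam) (K := K) (a := 0) m
  have hclosed := layerBound_mul_one_sub_sub (lam := lam) (K := K) (a := a) m
  nlinarith [mul_nonpos_of_nonneg_of_nonpos (pow_nonneg hlam m)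
      (by linarith : a * (1 - lam) - 2 * lam * K ≤ 0),
    mul_le_mul_of_nonneg_right hpath (by linarith : (0 : ℝ) ≤ 1 - lam)]

theorem dist_layers_le (F : IsFloor d lam i S R) (hlam : 0 < lam) (hlam₄ : 4 * lam < 1)
    (hD : 0 ≤ D) (hdiam : ∀ s ∈ S, ∀ t ∈ S, d s t ≤ D)
    (hanchor : ∀ r > R, ∃ s ∈ S, d s (s + e i) < r)
    (hcond : D * (1 - lam ^ 2) < (1 - 4 * lam) * R) {s t : Grid} (hs : s ∈ S) (ht : t ∈ S)
    (m n : ℕ) :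
    d (s + (m + 1) • e i) (t + (n + 1) • e i) ≤
      2 * lam * ((2 / (1 - lam)) * D + ((1 + 2 * lam) / (1 - lam)) * R) := by
  have hDR := mul_one_add_lt_mul_one_sub hlam hlam₄ hD hcond
  have hR : 0 < R := by nlinarith
  have hpos : 0 < 1 - lam := by linarith
  have h3 : 3 * lam * D < (1 - 4 * lam) * R := by
    nlinarith [mul_nonneg hD (by nlinarith : (0 : ℝ) ≤ 1 - 3 * lam - lam ^ 2)]
  have hfix : lam * (2 * lam * (R + D) + ((1 + lam) * D + (1 + 2 * lam) * R)) ≤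
      2 * lam * (R + D) := by
    nlinarith [mul_nonneg hlam.le (mul_nonneg (by linarith : (0 : ℝ) ≤ 1 - 3 * lam) hD),
      mul_nonneg hlam.le (mul_nonneg (by linarith : (0 : ℝ) ≤ 1 - 4 * lam) hR.le)]
  have hsmall :
      (1 + lam) * (2 * lam * (R + D)) + lam * ((1 + lam) * D + (1 + 2 * lam) * R) < R := by
    nlinarith [mul_lt_mul_of_pos_left h3 (by linarith : (0 : ℝ) < 1 + lam)]
  have hsum : 2 * lam * (R + D) * (1 - lam) ≤
      2 * lam * ((1 + lam) * D + (1 + 2 * lam) * R) := by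
    nlinarith [mul_nonneg hlam.le (mul_nonneg hlam.le hD),
      mul_nonneg hlam.le (mul_nonneg hlam.le hR.le)]
  obtain ⟨h₁, hK⟩ := F.layer_one_bounds hlam.le hD hdiam hanchor (by linarith)
  have hmul := F.dist_layers_mul_le hlam.le (by positivity) hK h₁ hfix hsmall hsum (by linarith)
    hs ht m n
  have htarget : 2 * lam * ((2 / (1 - lam)) * D + ((1 + 2 * lam) / (1 - lam)) * R) =
      2 * lam * ((1 + lam) * D + (1 + 2 * lam) * R) / (1 - lam) + 2 * lam * D := by
    field_simp
    ring
  rw [htarget]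
  linarith [(le_div_iff₀ hpos).2 hmul, mul_nonneg hlam.le hD]

end IsFloor

theorem stmt11 (d : Grid → Grid → ℝ) (lam : ℝ) (h0 : 0 < lam) (h1 : lam < 1/3)
    (hd : Pseudo d) (hc : Contractive d lam)
    (α : Grid) (i₁ i₂ : Fin 3) (hii : i₁ ≠ i₂) (D R : ℝ)
    (hD : ∀ m n m' n' : ℕ,
      d (α + m • e i₁ + n • e i₂) (α + m' • e i₁ + n' • e i₂) ≤ D)
    (hR : IsGLB (rho d '' {s : Grid | ∃ m n : ℕ, s = α + m • e i₁ + n • e i₂}) R)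
    (hcond : D * (1 - lam ^ 2) < (1 - 4 * lam) * R) :
    ∃ β : Grid, ∀ k k' : Grid,
      d (β + k) (β + k') ≤ 2 * lam * ((2 / (1 - lam)) * D + ((1 + 2 * lam) / (1 - lam)) * R) := by
  obtain ⟨i₃, hne, hdecomp⟩ := exists_third_dir hii
  have hdiam : ∀ s ∈ quarterPlane α i₁ i₂, ∀ t ∈ quarterPlane α i₁ i₂, d s t ≤ D := by
    rintro _ ⟨m, n, rfl⟩ _ ⟨m', n', rfl⟩
    exact hD m n m' n'
  have hD0 : 0 ≤ D := (hd.nonneg α α).trans (by simpa using hD 0 0 0 0)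
  have hR0 : 0 ≤ R := hR.2 <| by
    rintro _ ⟨s, -, rfl⟩
    exact (hd.nonneg _ _).trans (dist_add_e_le_rho d s 0)
  have hlam₄ := four_mul_lt_one h1 hD0 hR0 hcond
  have hDR : D < R := by nlinarith [mul_one_add_lt_mul_one_sub h0 hlam₄ hD0 hcond]
  have hS : ∀ j ≠ i₃, ∀ s ∈ quarterPlane α i₁ i₂, s + e j ∈ quarterPlane α i₁ i₂ :=
    fun j hj _ => add_e_mem_quarterPlane (hne j hj)
  have F : IsFloor d lam i₃ (quarterPlane α i₁ i₂) R :=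
    ⟨hd, hc, hS, fun s hs => le_dist_add_e_of_isGLB hS hdiam hDR hR hs⟩
  refine ⟨α + e i₃, fun k k' => ?_⟩
  obtain ⟨s, hs, c, hk⟩ := exists_add_nsmul_eq hdecomp α k
  obtain ⟨t, ht, c', hk'⟩ := exists_add_nsmul_eq hdecomp α k'
  rw [hk, hk']
  exact F.dist_layers_le h0 hlam₄ hD0 hdiam (fun r hr => exists_dist_add_e_lt_of_isGLB hR i₃ hr)
    hcond hs ht c c'
end

section
/- Let d be a pseudometric on ℕ₀³ with coordinatewise λ-contraction property and no 1-way Cauchy sequence, and let μ = inf_x ρ(x) > 0. Set C₁ = 49158. Given K ≥ 1, if 1 > (2+λ)·λ·K·C₁, then every 3-way set (translated octant) has diameter greater than K·μ. -/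
/-!
If some octant `β + ℕ₀³` had diameter at most `Kμ`, hypothesis (a) would give a 2-way set `S` of
diameter at most `D = λ C₁ K μ`. Since `ρ` at a point is bounded by the diameter of any octant
containing it, `R = inf_S ρ` lies between `μ` and `Kμ`. The smallness assumption on `λ K` makes
`(2 + λ) D < μ ≤ R`, so (b) produces an octant of diameter at most `6 λ R ≤ 6 λ K μ < μ`, which is
impossible because `ρ` at its apex is at least `μ`.
-/

open Set

lemma rho_le {d : Grid → Grid → ℝ} {x : Grid} {D : ℝ} (h : ∀ i, d x (x + e i) ≤ D) :
    rho d x ≤ D :=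
  max_le (h 0) (max_le (h 1) (h 2))

lemma rho_le_of_octant_diam_le {d : Grid → Grid → ℝ} {β : Grid} {D : ℝ}
    (h : ∀ k k' : Grid, d (β + k) (β + k') ≤ D) (k : Grid) : rho d (β + k) ≤ D :=
  rho_le fun i => by simpa only [add_assoc] using h k (k + e i)

lemma exists_isGLB_image_between {α : Type*} {f : α → ℝ} {S : Set α} {μ : ℝ}
    (hμ : μ ∈ lowerBounds (range f)) {x : α} (hx : x ∈ S) :
    ∃ R, IsGLB (f '' S) R ∧ μ ≤ R ∧ R ≤ f x := by
  have hne : (f '' S).Nonempty := ⟨f x, mem_image_of_mem f hx⟩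
  have hlb : μ ∈ lowerBounds (f '' S) := lowerBounds_mono_set (image_subset_range f S) hμ
  exact ⟨sInf (f '' S), isGLB_csInf hne ⟨μ, hlb⟩, le_csInf hne hlb,
    csInf_le ⟨μ, hlb⟩ (mem_image_of_mem f hx)⟩

theorem stmt13_general (d : Grid → Grid → ℝ) (lam : ℝ) (h0 : 0 < lam)
    (μ : ℝ) (hμ : IsGLB (Set.range (rho d)) μ) (hμ0 : 0 < μ)
    (K : ℝ) (hK : 1 ≤ K)
    (hlamK : 1 > (2 + lam) * lam * K * 49158)
    -- (a): every 3-way set of diameter ≤ D contains a 2-way subset of diameter ≤ λ·C₁·D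
    (ha : ∀ (β : Grid) (D : ℝ), (∀ k k' : Grid, d (β + k) (β + k') ≤ D) →
      ∃ S : Set Grid, S.Nonempty ∧ (∀ s ∈ S, ∃ k : Grid, s = β + k) ∧ TwoWaySet S ∧
        ∀ x ∈ S, ∀ y ∈ S, d x y ≤ lam * 49158 * D)
    -- (b): a 2-way set with inf ρ > (2+λ)·diam yields a 3-way set of diameter ≤ 6λ·inf ρ
    (hb : ∀ (S : Set Grid) (D R : ℝ), TwoWaySet S →
      (∀ x ∈ S, ∀ y ∈ S, d x y ≤ D) → IsGLB (rho d '' S) R → R > (2 + lam) * D →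
      ∃ β : Grid, ∀ k k' : Grid, d (β + k) (β + k') ≤ 6 * lam * R) :
    ∀ β : Grid, ∃ k k' : Grid, d (β + k) (β + k') > K * μ := by
  intro β
  by_contra! hβ
  obtain ⟨S, ⟨x, hxS⟩, hSβ, hS, hSdiam⟩ := ha β (K * μ) hβ
  obtain ⟨k, rfl⟩ := hSβ x hxS
  obtain ⟨R, hR, hμR, hRx⟩ := exists_isGLB_image_between hμ.1 hxS
  have hRK : R ≤ K * μ := hRx.trans (rho_le_of_octant_diam_le hβ k)
  have hlamK_pos : 0 < lam * K := by positivity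
  obtain ⟨β', hβ'⟩ := hb S _ R hS hSdiam hR (by nlinarith)
  have hρβ' : rho d β' ≤ 6 * lam * R := by
    simpa only [add_zero] using rho_le_of_octant_diam_le hβ' 0
  have : 6 * lam * R < μ := by nlinarith
  linarith [hμ.1 (mem_range_self β')]

theorem stmt13 (d : Grid → Grid → ℝ) (lam : ℝ) (h0 : 0 < lam) (h1 : lam < 1)
    (hd : Pseudo d) (hc : Contractive d lam)
    (hno : ¬ ∃ s : ℕ → Grid, OneWay s ∧ IsCauchySeq d s)
    (μ : ℝ) (hμ : IsGLB (Set.range (rho d)) μ) (hμ0 : 0 < μ)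
    (K : ℝ) (hK : 1 ≤ K)
    (hlamK : 1 > (2 + lam) * lam * K * 49158)
    -- (a): every 3-way set of diameter ≤ D contains a 2-way subset of diameter ≤ λ·C₁·D
    (ha : ∀ (β : Grid) (D : ℝ), (∀ k k' : Grid, d (β + k) (β + k') ≤ D) →
      ∃ S : Set Grid, S.Nonempty ∧ (∀ s ∈ S, ∃ k : Grid, s = β + k) ∧ TwoWaySet S ∧
        ∀ x ∈ S, ∀ y ∈ S, d x y ≤ lam * 49158 * D)
    -- (b): a 2-way set with inf ρ > (2+λ)·diam yields a 3-way set of diameter ≤ 6λ·inf ρ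
    (hb : ∀ (S : Set Grid) (D R : ℝ), TwoWaySet S →
      (∀ x ∈ S, ∀ y ∈ S, d x y ≤ D) → IsGLB (rho d '' S) R → R > (2 + lam) * D →
      ∃ β : Grid, ∀ k k' : Grid, d (β + k) (β + k') ≤ 6 * lam * R) :
    ∀ β : Grid, ∃ k k' : Grid, d (β + k) (β + k') > K * μ :=
  stmt13_general d lam h0 μ hμ hμ0 K hK hlamK ha hb
end

section
/- Let d be a pseudometric on ℕ₀³ with coordinatewise λ-contraction property, no 1-way Cauchy sequence, μ = inf ρ > 0, and K ≥ 2. Fix x₀ with ρ(x₀) < 2μ and for i ∈ [3] define Sᵢ(K,x₀) = {y : d(x₀,y) ≤ Kμ and d(y, y+eᵢ) ≤ Kμ}. If 1 > 2λKC₁(2+λ)²/(1−λ) (with C₁ = 49158), then in every 3-way set z + ℕ₀³ there exists t with d(t,x₀) ≤ ((2+λ)/(1−λ))Kμ such that for some i ∈ [3], d(s+eᵢ, t+eᵢ) > λ·d(s,t) for every s ∈ Sᵢ(K,x₀). -/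
/-!
Suppose the conclusion fails for the 3-way set `z + ℕ₀³`. Then the ball of radius
`B = (2 + λ) K μ / (1 - λ)` around `x₀` is closed under every step `t ↦ t + eᵢ` inside that set:
if `s ∈ Sᵢ(K, x₀)` contracts with `t` in direction `i`, the triangle inequality through
`s + eᵢ` and `s` gives `d(t + eᵢ, x₀) ≤ λ (Kμ + B) + 2Kμ = B`. By (a) the ball meets the 3-way set,
so it contains a whole 3-way subset, whose diameter is then at most `2B`, contradicting (b).
-/

lemma Grid.add_eq_nsmul_e (z k : Grid) :
    z + k = z + k 0 • e 0 + k 1 • e 1 + k 2 • e 2 := by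
  funext j
  fin_cases j <;> simp [e]

lemma Grid.add_nsmul_e_induction {P : Grid → Prop} (hP : ∀ t i, P t → P (t + e i))
    {t : Grid} (ht : P t) (i : Fin 3) (n : ℕ) : P (t + n • e i) := by
  induction n with
  | zero => rwa [zero_nsmul, add_zero]
  | succ n ih => rw [succ_nsmul, ← add_assoc]; exact hP _ i ih

lemma Grid.add_induction {P : Grid → Prop} (hP : ∀ t i, P t → P (t + e i))
    {z : Grid} (hz : P z) (k : Grid) : P (z + k) := by
  rw [Grid.add_eq_nsmul_e]
  exact Grid.add_nsmul_e_induction hP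
    (Grid.add_nsmul_e_induction hP (Grid.add_nsmul_e_induction hP hz 0 _) 1 _) 2 _

namespace Pseudo

variable {d : Grid → Grid → ℝ}

lemma dist_le_add_dist_of_common (hd : Pseudo d) (a b x : Grid) :
    d a b ≤ d a x + d b x := by
  obtain ⟨-, -, hsymm, htri⟩ := hd
  simpa [hsymm x b] using htri a x b

lemma dist_add_e_le_of_contracts (hd : Pseudo d) {lam R B : ℝ} (hlam : 0 ≤ lam)
    {x₀ s t : Grid} {i : Fin 3} (ht : d t x₀ ≤ B) (hs : d x₀ s ≤ R)
    (hsi : d s (s + e i) ≤ R) (hst : d (s + e i) (t + e i) ≤ lam * d s t) :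
    d (t + e i) x₀ ≤ lam * (R + B) + 2 * R := by
  obtain ⟨-, -, hsymm, htri⟩ := hd
  have hst' : d s t ≤ R + B := by
    linarith [htri s x₀ t, hsymm s x₀, hsymm x₀ t]
  have := mul_le_mul_of_nonneg_left hst' hlam
  linarith [htri (t + e i) (s + e i) x₀, htri (s + e i) s x₀, hsymm (t + e i) (s + e i),
    hsymm (s + e i) s, hsymm s x₀]

end Pseudo

lemma contraction_radius_eq {lam : ℝ} (hlam : lam < 1) (R : ℝ) :
    lam * (R + (2 + lam) / (1 - lam) * R) + 2 * R = (2 + lam) / (1 - lam) * R := by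
  have : 1 - lam ≠ 0 := by linarith
  field_simp
  ring

lemma div_one_sub_add_le_contraction_radius {lam μ K r : ℝ} (h0 : 0 < lam) (h1 : lam < 1)
    (hμ0 : 0 < μ) (hK : 2 ≤ K) (hr : r < 2 * μ) :
    r / (1 - lam) + μ ≤ (2 + lam) / (1 - lam) * (K * μ) := by
  have h1l : 0 < 1 - lam := by linarith
  rw [div_add' _ _ _ h1l.ne', div_mul_eq_mul_div, div_le_div_iff_of_pos_right h1l]
  nlinarith [mul_nonneg (mul_nonneg (sub_nonneg.2 hK) hμ0.le) (by linarith : (0 : ℝ) ≤ 2 + lam),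
    mul_pos h0 hμ0]

theorem stmt15_general (d : Grid → Grid → ℝ) (lam : ℝ) (h0 : 0 < lam) (h1 : lam < 1)
    (hd : Pseudo d)
    (μ : ℝ) (hμ0 : 0 < μ)
    (K : ℝ) (hK : 2 ≤ K)
    (x₀ : Grid) (hx₀ : rho d x₀ < 2 * μ)
    -- (a): in each 3-way set there is a point within ρ(x₀)/(1-λ)+ε of x₀
    (ha : ∀ ε > (0 : ℝ), ∀ z : Grid, ∃ k : Grid,
      d (z + k) x₀ ≤ rho d x₀ / (1 - lam) + ε)
    -- (b): all 3-way sets have diameter > 2((2+λ)/(1-λ))Kμ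
    (hb : ∀ β : Grid, ∃ k k' : Grid,
      d (β + k) (β + k') > 2 * ((2 + lam) / (1 - lam)) * K * μ) :
    ∀ z : Grid, ∃ k : Grid,
      d (z + k) x₀ ≤ ((2 + lam) / (1 - lam)) * K * μ ∧
      ∃ i : Fin 3, ∀ s : Grid, d x₀ s ≤ K * μ → d s (s + e i) ≤ K * μ →
        d (s + e i) (z + k + e i) > lam * d s (z + k) := by
  intro z
  by_contra! hcon
  simp only [mul_assoc] at hcon hb
  set B := (2 + lam) / (1 - lam) * (K * μ)
  obtain ⟨k₀, hk₀⟩ := ha μ hμ0 z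
  have hstart : d (z + k₀) x₀ ≤ B :=
    hk₀.trans (div_one_sub_add_le_contraction_radius h0 h1 hμ0 hK hx₀)
  have hclosed : ∀ k i, d (z + k) x₀ ≤ B → d (z + (k + e i)) x₀ ≤ B := by
    intro k i hk
    obtain ⟨s, hs, hsi, hst⟩ := hcon k hk i
    rw [← add_assoc]
    calc _ ≤ lam * (K * μ + B) + 2 * (K * μ) :=
          hd.dist_add_e_le_of_contracts h0.le hk hs hsi hst
      _ = B := contraction_radius_eq h1 _
  obtain ⟨k, k', hkk⟩ := hb (z + k₀)
  have hk := Grid.add_induction (P := fun k => d (z + k) x₀ ≤ B) hclosed hstart k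
  have hk' := Grid.add_induction (P := fun k => d (z + k) x₀ ≤ B) hclosed hstart k'
  simp only [← add_assoc] at hk hk'
  linarith [hd.dist_le_add_dist_of_common (z + k₀ + k) (z + k₀ + k') x₀]

theorem stmt15 (d : Grid → Grid → ℝ) (lam : ℝ) (h0 : 0 < lam) (h1 : lam < 1)
    (hd : Pseudo d) (hc : Contractive d lam)
    (hno : ¬ ∃ s : ℕ → Grid, OneWay s ∧ IsCauchySeq d s)
    (μ : ℝ) (hμ : IsGLB (Set.range (rho d)) μ) (hμ0 : 0 < μ)
    (K : ℝ) (hK : 2 ≤ K)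
    (x₀ : Grid) (hx₀ : rho d x₀ < 2 * μ)
    (hcond : 1 > 2 * lam * K * 49158 * (2 + lam) ^ 2 / (1 - lam))
    -- (a): in each 3-way set there is a point within ρ(x₀)/(1-λ)+ε of x₀
    (ha : ∀ ε > (0 : ℝ), ∀ z : Grid, ∃ k : Grid,
      d (z + k) x₀ ≤ rho d x₀ / (1 - lam) + ε)
    -- (b): all 3-way sets have diameter > 2((2+λ)/(1-λ))Kμ
    (hb : ∀ β : Grid, ∃ k k' : Grid,
      d (β + k) (β + k') > 2 * ((2 + lam) / (1 - lam)) * K * μ) :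
    ∀ z : Grid, ∃ k : Grid,
      d (z + k) x₀ ≤ ((2 + lam) / (1 - lam)) * K * μ ∧
      ∃ i : Fin 3, ∀ s : Grid, d x₀ s ≤ K * μ → d s (s + e i) ≤ K * μ →
        d (s + e i) (z + k + e i) > lam * d s (z + k) :=
  stmt15_general d lam h0 h1 hd μ hμ0 K hK x₀ hx₀ ha hb
end

section
/- Let d be a pseudometric on ℕ₀³ with coordinatewise λ-contraction property and μ = inf ρ > 0. Suppose x ∈ ℕ₀³ satisfies: for two distinct pairs {i,j} ≠ {i',j'} of indices, the pairs (x+eᵢ, x+eⱼ) and (x+e_{i'}, x+e_{j'}) are both contracted in the same direction k (i.e. d(x+eᵢ+e_k, x+eⱼ+e_k) ≤ λd(x+eᵢ,x+eⱼ) and similarly for the other pair). If ρ(x) ≤ Kμ and λ ≤ 1/5 then diam N(x+e_k) ≤ 4λKμ and ρ(x+e_k) ≤ (2+5λ)Kμ. -/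
set_option maxHeartbeats 1000000 in
set_option synthInstance.maxHeartbeats 400000 in
set_option synthInstance.maxSize 1024 in
lemma fin3cover : ∀ i j i' j' : Fin 3, i ≠ j → i' ≠ j' →
    ¬((i = i' ∧ j = j') ∨ (i = j' ∧ j = i')) → ∀ p q : Fin 3,
    ∃ r, ((p=i∧r=j)∨(p=j∧r=i)∨(p=i'∧r=j')∨(p=j'∧r=i')∨p=r) ∧
         ((r=i∧q=j)∨(r=j∧q=i)∨(r=i'∧q=j')∨(r=j'∧q=i')∨r=q) := by decide

theorem stmt16 (d : Grid → Grid → ℝ) (lam : ℝ) (h0 : 0 < lam) (h15 : lam ≤ 1/5)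
    (hd : Pseudo d) (hc : Contractive d lam)
    (μ : ℝ) (hμ : IsGLB (Set.range (rho d)) μ) (hμ0 : 0 < μ)
    (K : ℝ) (x : Grid) (hρx : rho d x ≤ K * μ)
    (i j i' j' k : Fin 3) (hij : i ≠ j) (hij' : i' ≠ j')
    (hpairs : ({i, j} : Set (Fin 3)) ≠ {i', j'})
    (hcon1 : d (x + e i + e k) (x + e j + e k) ≤ lam * d (x + e i) (x + e j))
    (hcon2 : d (x + e i' + e k) (x + e j' + e k) ≤ lam * d (x + e i') (x + e j')) :
    (∀ a b : Fin 3, d (x + e k + e a) (x + e k + e b) ≤ 4 * lam * K * μ) ∧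
      rho d (x + e k) ≤ (2 + 5 * lam) * K * μ := by
  obtain ⟨hrefl, hnn, hsymm, htri⟩ := hd
  have hμle : μ ≤ K * μ := le_trans (hμ.1 ⟨x, rfl⟩) hρx
  have hKμ0 : 0 < K * μ := lt_of_lt_of_le hμ0 hμle
  have hxi : ∀ a : Fin 3, d x (x + e a) ≤ K * μ := by
    intro a
    fin_cases a
    · exact le_trans (le_max_left _ _) hρx
    · exact le_trans (le_trans (le_max_left _ _) (le_max_right _ _)) hρx
    · exact le_trans (le_trans (le_max_right _ _) (le_max_right _ _)) hρx
  have hlong : ∀ a b : Fin 3, d (x + e a) (x + e b) ≤ 2 * (K * μ) := by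
    intro a b
    calc d (x + e a) (x + e b) ≤ d (x + e a) x + d x (x + e b) := htri _ _ _
    _ ≤ K*μ + K*μ := add_le_add (by rw [hsymm]; exact hxi a) (hxi b)
    _ = 2*(K*μ) := by ring
  have hne : ¬((i = i' ∧ j = j') ∨ (i = j' ∧ j = i')) := by
    rintro (⟨rfl, rfl⟩ | ⟨rfl, rfl⟩)
    · exact hpairs rfl
    · exact hpairs (Set.pair_comm _ _)
  have hD : ∀ a b : Fin 3,
      ((a=i∧b=j)∨(a=j∧b=i)∨(a=i'∧b=j')∨(a=j'∧b=i')∨a=b) →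
      d (x + e a + e k) (x + e b + e k) ≤ 2 * lam * (K * μ) := by
    rintro a b (⟨rfl,rfl⟩|⟨rfl,rfl⟩|⟨rfl,rfl⟩|⟨rfl,rfl⟩|rfl)
    · exact hcon1.trans (by nlinarith [hlong a b, hlong b a])
    · rw [hsymm]; exact hcon1.trans (by nlinarith [hlong a b, hlong b a])
    · exact hcon2.trans (by nlinarith [hlong a b, hlong b a])
    · rw [hsymm]; exact hcon2.trans (by nlinarith [hlong a b, hlong b a])
    · rw [hrefl]; nlinarith
  have hdiam : ∀ a b : Fin 3,
      d (x + e a + e k) (x + e b + e k) ≤ 4 * lam * K * μ := by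
    intro a b
    obtain ⟨r, h1, h2⟩ := fin3cover i j i' j' hij hij' hne a b
    have ht := htri (x + e a + e k) (x + e r + e k) (x + e b + e k)
    have h1' := hD a r h1
    have h2' := hD r b h2
    nlinarith
  constructor
  · intro a b
    rw [add_right_comm x (e k) (e a), add_right_comm x (e k) (e b)]
    exact hdiam a b
  · obtain ⟨m, hm⟩ := hc x (x + e k)
    have hm' : d (x + e m) (x + e k + e m) ≤ lam * (K * μ) := by
      have := hxi k
      nlinarith
    have key : ∀ a : Fin 3, d (x + e k) (x + e k + e a) ≤ (2 + 5 * lam) * K * μ := by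
      intro a
      have t1 := htri (x + e k) (x + e m) (x + e k + e a)
      have t2 := htri (x + e m) (x + e k + e m) (x + e k + e a)
      have t3 : d (x + e k + e m) (x + e k + e a) ≤ 4 * lam * K * μ := by
        rw [add_right_comm x (e k) (e m), add_right_comm x (e k) (e a)]
        exact hdiam m a
      have t4 := hlong k m
      nlinarith
    exact max_le (key 0) (max_le (key 1) (key 2))
end

section
/- Let d be a pseudometric on ℕ₀³ with coordinatewise λ-contraction property, no 1-way Cauchy sequence, and μ = inf ρ > 0. Suppose points y₀, y₁, y₂, ... in ℕ₀³ satisfy yₙ = y₀ + n·e₃ for all n, together with: d(yₙ+e₁, yₙ+e₂) ≤ 4λ^{n+1}μ, d(yₙ+e₁, y_{n+1}+e₁) ≤ (45+8n)λ^{n+1}μ, and d(yₙ+e₂, y_{n+1}+e₂) ≤ (45+8n)λ^{n+1}μ for all n ≥ 0, with λ < 1/2. Then (yₙ+e₁)_{n≥0} is a Cauchy sequence in (ℕ₀³,d), and consequently a 1-way Cauchy sequence exists — a contradiction. Hence no such family of points exists. -/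
/-! The sequence `yₙ + e₀` moves along `e₂`, so it is 1-way, and its steps are bounded by the
summable sequence `(45 + 8n) λⁿ⁺¹ μ`; hence it is a 1-way Cauchy sequence. -/

theorem summable_affine_mul_geometric {r : ℝ} (hr : |r| < 1) (a b : ℝ) :
    Summable fun n : ℕ => (a + b * n) * r ^ n := by
  have hgeom : Summable fun n : ℕ => r ^ n := summable_geometric_of_abs_lt_one hr
  have hlin : Summable fun n : ℕ => (n : ℝ) * r ^ n := by
    simpa using summable_pow_mul_geometric_of_norm_lt_one (R := ℝ) 1 (Real.norm_eq_abs r ▸ hr)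
  simpa only [add_mul, mul_assoc] using (hgeom.mul_left a).add (hlin.mul_left b)

namespace Pseudo

variable {d : Grid → Grid → ℝ}

/-- Not an instance: `Grid` already carries the sup metric. -/
abbrev toPseudoMetricSpace (hd : Pseudo d) : PseudoMetricSpace Grid where
  dist := d
  dist_self := hd.1
  dist_comm := hd.2.2.1
  dist_triangle := hd.2.2.2

theorem isCauchySeq_of_dist_le_of_summable (hd : Pseudo d) {s : ℕ → Grid} (c : ℕ → ℝ)
    (hs : ∀ n, d (s n) (s (n + 1)) ≤ c n) (hc : Summable c) : IsCauchySeq d s := by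
  let := hd.toPseudoMetricSpace
  exact Metric.cauchySeq_iff.mp (cauchySeq_of_dist_le_of_summable (f := s) c hs hc)

end Pseudo

theorem OneWay.add_const {s : ℕ → Grid} (hs : OneWay s) (x : Grid) :
    OneWay fun n => s n + x := fun n => by
  obtain ⟨i, hi⟩ := hs n
  exact ⟨i, by simp only [hi, add_right_comm]⟩

theorem oneWay_add_nsmul (x : Grid) (i : Fin 3) : OneWay fun n => x + n • e i :=
  fun n => ⟨i, by simp only [succ_nsmul, add_assoc]⟩

theorem stmt19_general (d : Grid → Grid → ℝ) (lam : ℝ) (h0 : 0 < lam) (h1 : lam < 1/2)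
    (hd : Pseudo d)
    (hno : ¬ ∃ s : ℕ → Grid, OneWay s ∧ IsCauchySeq d s)
    (μ : ℝ)
    (y₀ : Grid) (y : ℕ → Grid) (hy : ∀ n : ℕ, y n = y₀ + n • e 2)
    (hb2 : ∀ n : ℕ, d (y n + e 0) (y (n + 1) + e 0) ≤ (45 + 8 * (n : ℝ)) * lam ^ (n + 1) * μ) :
    False := by
  have hlam : |lam| < 1 := by rw [abs_of_pos h0]; linarith
  have hsum : Summable fun n : ℕ => (45 + 8 * (n : ℝ)) * lam ^ (n + 1) * μ := by
    simpa only [pow_succ, mul_assoc] using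
      (summable_affine_mul_geometric hlam 45 8).mul_right (lam * μ)
  refine hno ⟨fun n => y n + e 0, ?_, hd.isCauchySeq_of_dist_le_of_summable _ hb2 hsum⟩
  simpa only [hy] using (oneWay_add_nsmul y₀ 2).add_const (e 0)

theorem stmt19 (d : Grid → Grid → ℝ) (lam : ℝ) (h0 : 0 < lam) (h1 : lam < 1/2)
    (hd : Pseudo d) (hc : Contractive d lam)
    (hno : ¬ ∃ s : ℕ → Grid, OneWay s ∧ IsCauchySeq d s)
    (μ : ℝ) (hμ : IsGLB (Set.range (rho d)) μ) (hμ0 : 0 < μ)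
    (y₀ : Grid) (y : ℕ → Grid) (hy : ∀ n : ℕ, y n = y₀ + n • e 2)
    (hb1 : ∀ n : ℕ, d (y n + e 0) (y n + e 1) ≤ 4 * lam ^ (n + 1) * μ)
    (hb2 : ∀ n : ℕ, d (y n + e 0) (y (n + 1) + e 0) ≤ (45 + 8 * (n : ℝ)) * lam ^ (n + 1) * μ)
    (hb3 : ∀ n : ℕ, d (y n + e 1) (y (n + 1) + e 1) ≤ (45 + 8 * (n : ℝ)) * lam ^ (n + 1) * μ) :
    False :=
  stmt19_general d lam h0 h1 hd hno μ y₀ y hy hb2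
end
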